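/- arXiv:2204.12538 — 7 statements merged into one kernel-verified Lean document; each statement's English description precedes it below -/
import Mathlib

section
/- For all integers n ≥ 2 and k ≥ 2 with n ≥ 2k, R(n, 2k-1) + R(n, 2k) = R(n+1, 2k), where R(n,s) is defined by the explicit binomial sum below. -/
/-!
Substituting `m = j + ⌊(s-1)/2⌋ - 1` writes `R(n, s)` as `G(n-2, s-2)`, where
`G(N, t) = ∑ₘ C(m, t-m) C(N-m, m)` (`shiftedRcount`) has generating function
`1 / (1 - y - x y² - x² y²)`.
Hence `G(N+2, t+2) = G(N+1, t+2) + G(N, t+1) + G(N, t)`, which follows from Pascal's rule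
applied once in each binomial factor. The identity `G(N, t) + G(N, t+1) = G(N+1, t+1)` for
`t < N` then follows by induction on `t`: the recurrence reduces it at `(N+1, t+1)` to the
same identity at `(N, t)`.
-/

open Finset

/-- The number `R(n,s)` of type I/III R-decompositions with `n` crossings and
`s` Seifert circles, given by the explicit binomial sum. Note that in natural
number arithmetic `⌈(s-1)/2⌉ = s/2`, `⌊(s-1)/2⌋ = (s-1)/2`, `⌊(s+1)/2⌋ = (s+1)/2`,
and `((-1)^s+1)/2` is `1` if `s` is even and `0` otherwise. -/
def Rcount (n s : ℕ) : ℕ :=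
  ∑ j ∈ Finset.Icc 1 (min (s / 2) (n / 2 - (s - 1) / 2)),
    Nat.choose (j + (s - 1) / 2 - 1) (2 * j - (if Even s then 1 else 0) - 1) *
      Nat.choose (n - j - (s + 1) / 2) (j + (s - 1) / 2 - 1)

/-- The number `RS(n,s)` of symmetric type III R-decompositions with `n` crossings
and `s` Seifert circles; it is `0` for odd `s`, and for `s = 2k` it is given by the
explicit binomial sum, where the indicator `((-1)^{(j+k)n}+1)/2` is `1` exactly when
`(j+k)*n` is even. Note `⌈(j+k)/2⌉ = (j+k+1)/2` in natural number arithmetic. -/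
def RScount (n s : ℕ) : ℕ :=
  if Even s then
    ∑ j ∈ Finset.Icc 1 (min (s / 2) (n / 2 + 1 - s / 2)),
      (if Even ((j + s / 2) * n) then 1 else 0) *
        (Nat.choose ((j + s / 2) / 2 - 1) (j - 1) *
          Nat.choose (n / 2 - (j + s / 2 + 1) / 2) ((j + s / 2) / 2 - 1))
  else 0

def shiftedRcount (N t : ℕ) : ℕ :=
  ∑ m ∈ range (t + 1), m.choose (t - m) * (N - m).choose m

theorem shiftedRcount_zero_right (N : ℕ) : shiftedRcount N 0 = 1 := by
  simp [shiftedRcount]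

theorem shiftedRcount_one_right (N : ℕ) : shiftedRcount N 1 = N - 1 := by
  simp [shiftedRcount, sum_range_succ]

/-- Pascal's rule for the upper index `N + 1 - m`; it also holds when `N < m`, where all three
binomials vanish. -/
theorem choose_sub_add_one_succ (N m : ℕ) :
    (N + 1 - m).choose (m + 1) = (N - m).choose m + (N - m).choose (m + 1) := by
  rcases le_or_gt m N with hm | hm
  · rw [Nat.sub_add_comm hm, Nat.choose_succ_succ]
  · rw [Nat.choose_eq_zero_of_lt (show N + 1 - m < m + 1 by omega),
      Nat.choose_eq_zero_of_lt (show N - m < m by omega),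
      Nat.choose_eq_zero_of_lt (show N - m < m + 1 by omega)]

theorem shiftedRcount_succ_left_eq_sum (N t : ℕ) :
    shiftedRcount (N + 1) (t + 2) =
      ∑ m ∈ range (t + 2), (m + 1).choose (t + 1 - m) * (N - m).choose (m + 1) := by
  rw [shiftedRcount, sum_range_succ']
  simp

theorem sum_choose_succ_eq_shiftedRcount_add (N t : ℕ) :
    ∑ m ∈ range (t + 2), (m + 1).choose (t + 1 - m) * (N - m).choose m =
      shiftedRcount N (t + 1) + shiftedRcount N t := by
  have pascal : ∀ m ∈ range (t + 1), (m + 1).choose (t + 1 - m) * (N - m).choose m =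
      m.choose (t + 1 - m) * (N - m).choose m + m.choose (t - m) * (N - m).choose m := by
    intro m hm
    rw [Nat.sub_add_comm (mem_range_succ_iff.mp hm), Nat.choose_succ_succ]
    ring
  rw [sum_range_succ, sum_congr rfl pascal, sum_add_distrib, shiftedRcount, shiftedRcount,
    sum_range_succ _ (t + 1)]
  simp only [Nat.sub_self, Nat.choose_zero_right]
  ring

theorem shiftedRcount_add_two (N t : ℕ) :
    shiftedRcount (N + 2) (t + 2) =
      shiftedRcount (N + 1) (t + 2) + shiftedRcount N (t + 1) + shiftedRcount N t := by
  rw [shiftedRcount_succ_left_eq_sum (N + 1), shiftedRcount_succ_left_eq_sum N,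
    add_assoc, ← sum_choose_succ_eq_shiftedRcount_add, ← sum_add_distrib]
  refine sum_congr rfl fun m _ => ?_
  rw [choose_sub_add_one_succ]
  ring

theorem shiftedRcount_add_shiftedRcount_succ {N t : ℕ} (h : t < N) :
    shiftedRcount N t + shiftedRcount N (t + 1) = shiftedRcount (N + 1) (t + 1) := by
  induction t generalizing N with
  | zero =>
    rw [shiftedRcount_zero_right, shiftedRcount_one_right, shiftedRcount_one_right]
    omega
  | succ t ih =>
    obtain ⟨M, rfl⟩ : ∃ M, N = M + 1 := ⟨N - 1, by omega⟩
    rw [shiftedRcount_add_two M t, ← ih (by omega)]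
    ring

theorem Rcount_eq_sum_range {n s : ℕ} (hn : 2 ≤ n) :
    Rcount n s = ∑ i ∈ range (s / 2),
      ((s - 1) / 2 + i).choose (s - 2 - ((s - 1) / 2 + i)) *
        (n - 2 - ((s - 1) / 2 + i)).choose ((s - 1) / 2 + i) := by
  have beyond : ∀ j ∈ Icc 1 (s / 2), j ∉ Icc 1 (min (s / 2) (n / 2 - (s - 1) / 2)) →
      (j + (s - 1) / 2 - 1).choose (2 * j - (if Even s then 1 else 0) - 1) *
        (n - j - (s + 1) / 2).choose (j + (s - 1) / 2 - 1) = 0 := by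
    intro j hj hj'
    simp only [mem_Icc] at hj hj'
    exact mul_eq_zero_of_right _ (Nat.choose_eq_zero_of_lt (by omega))
  rw [Rcount, sum_subset (Icc_subset_Icc_right (min_le_left _ _)) beyond,
    ← Ico_add_one_right_eq_Icc, sum_Ico_eq_sum_range, Nat.add_sub_cancel]
  refine sum_congr rfl fun i hi => ?_
  have hi : i < s / 2 := mem_range.mp hi
  rw [show 1 + i + (s - 1) / 2 - 1 = (s - 1) / 2 + i by omega,
    show n - (1 + i) - (s + 1) / 2 = n - 2 - ((s - 1) / 2 + i) by omega]
  congr 1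
  apply Nat.choose_symm_of_eq_add
  split_ifs with he
  · rw [Nat.even_iff] at he
    omega
  · rw [Nat.not_even_iff] at he
    omega

theorem Rcount_eq_shiftedRcount {n s : ℕ} (hn : 2 ≤ n) (hs : 2 ≤ s) :
    Rcount n s = shiftedRcount (n - 2) (s - 2) := by
  have below : ∀ m ∈ range ((s - 1) / 2), m.choose (s - 2 - m) * (n - 2 - m).choose m = 0 :=
    fun m hm => mul_eq_zero_of_left (Nat.choose_eq_zero_of_lt (by simp at hm; omega)) _
  rw [Rcount_eq_sum_range hn, shiftedRcount, show s - 2 + 1 = (s - 1) / 2 + s / 2 by omega,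
    sum_range_add, sum_eq_zero below, zero_add]

theorem Rcount_recurrence_general (n k : ℕ) (hk : 2 ≤ k) (hnk : 2 * k ≤ n) :
    Rcount n (2 * k - 1) + Rcount n (2 * k) = Rcount (n + 1) (2 * k) := by
  rw [Rcount_eq_shiftedRcount (by omega) (by omega), Rcount_eq_shiftedRcount (by omega) (by omega),
    Rcount_eq_shiftedRcount (by omega) (by omega),
    show 2 * k - 2 = 2 * k - 1 - 2 + 1 by omega, show n + 1 - 2 = n - 2 + 1 by omega]
  exact shiftedRcount_add_shiftedRcount_succ (by omega)

/-- For all integers `n ≥ 2` and `k ≥ 2` with `n ≥ 2k`,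
`R(n, 2k-1) + R(n, 2k) = R(n+1, 2k)`. -/
theorem Rcount_recurrence (n k : ℕ) (hn : 2 ≤ n) (hk : 2 ≤ k) (hnk : 2 * k ≤ n) :
    Rcount n (2 * k - 1) + Rcount n (2 * k) = Rcount (n + 1) (2 * k) :=
  Rcount_recurrence_general n k hk hnk
end

section
/- For every n ≥ 2, the total count Σ_{s=2}^{n} R(n,s) satisfies the recurrence of the Jacobsthal numbers: writing T(n) = Σ_{s=2}^{n} R(n,s), one has T(n) = J(n-1), where J is the Jacobsthal sequence defined by J(0)=0, J(1)=1, J(m)=J(m-1)+2J(m-2). Equivalently, T(n) = (2^{n-1} - (-1)^{n-1})/3. -/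
open Finset

/-- The Jacobsthal sequence: `J(0)=0`, `J(1)=1`, `J(m)=J(m-1)+2J(m-2)`. -/
def jacobsthal : ℕ → ℕ
  | 0 => 0
  | 1 => 1
  | (m + 2) => jacobsthal (m + 1) + 2 * jacobsthal m

lemma jac_int : ∀ m : ℕ, (3 * jacobsthal m : ℤ) = 2 ^ m - (-1) ^ m
  | 0 => by simp [jacobsthal]
  | 1 => by simp [jacobsthal]
  | (m + 2) => by
      have h1 := jac_int (m + 1)
      have h2 := jac_int m
      simp only [jacobsthal]
      push_cast
      ring_nf
      ring_nf at h1 h2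
      linarith [h1, h2]

lemma jac_sum : ∀ m : ℕ, ∑ a ∈ range m, 2 ^ a * Nat.choose (m - 1 - a) a = jacobsthal m
  | 0 => by simp [jacobsthal]
  | 1 => by simp [jacobsthal]
  | (m + 2) => by
      have h1 := jac_sum (m + 1)
      have h2 := jac_sum m
      rw [Finset.sum_range_succ]
      have hz : Nat.choose (m + 2 - 1 - (m + 1)) (m + 1) = 0 := by
        rw [Nat.choose_eq_zero_of_lt] ; omega
      rw [hz, Nat.mul_zero, Nat.add_zero, Finset.sum_range_succ']
      have hcongr : ∀ b ∈ range m, 2 ^ (b + 1) * Nat.choose (m + 2 - 1 - (b + 1)) (b + 1)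
          = 2 * (2 ^ b * Nat.choose (m - 1 - b) b) + 2 ^ (b+1) * Nat.choose (m - 1 - b) (b + 1) := by
        intro b hb
        simp only [Finset.mem_range] at hb
        have : m + 2 - 1 - (b + 1) = (m - 1 - b) + 1 := by omega
        rw [this, Nat.choose_succ_succ]
        ring
      rw [Finset.sum_congr rfl hcongr, Finset.sum_add_distrib, ← Finset.mul_sum, h2]
      have h3 : ∑ a ∈ range (m + 1), 2 ^ a * Nat.choose (m + 1 - 1 - a) a
          = ∑ b ∈ range m, 2 ^ (b + 1) * Nat.choose (m - 1 - b) (b + 1) + 1 := by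
        rw [Finset.sum_range_succ']
        congr 1
        · apply Finset.sum_congr rfl
          intro b hb
          simp only [Finset.mem_range] at hb
          congr 2
          omega
        · simp
      rw [h1] at h3
      simp only [jacobsthal, Nat.sub_zero, pow_zero, Nat.choose_zero_right, mul_one, one_mul]
      omega

lemma parity_split (f : ℕ → ℕ) : ∀ n : ℕ,
    ∑ s ∈ Icc 2 n, f s = (∑ k ∈ Icc 1 (n / 2), f (2 * k)) + ∑ k ∈ Icc 1 ((n - 1) / 2), f (2 * k + 1)
  | 0 => by simp
  | 1 => by simp
  | (m + 1) => by
      have ih := parity_split f m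
      rcases Nat.lt_or_ge m 1 with h | h
      · interval_cases m
        · simp
      rw [Finset.sum_Icc_succ_top (by omega), ih]
      rcases Nat.even_or_odd (m + 1) with ⟨k, hk⟩ | ⟨k, hk⟩
      · have h1 : (m + 1) / 2 = k := by omega
        have h2 : m / 2 = k - 1 := by omega
        have h3 : (m + 1 - 1) / 2 = k - 1 := by omega
        have h4 : (m - 1) / 2 = k - 1 := by omega
        rw [h1, h2, h3, h4]
        obtain ⟨k', rfl⟩ : ∃ k', k = k' + 1 := ⟨k - 1, by omega⟩
        have key : ∑ x ∈ Icc 1 (k' + 1), f (2 * x)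
            = ∑ x ∈ Icc 1 (k' + 1 - 1), f (2 * x) + f (m + 1) := by
          rw [Finset.sum_Icc_succ_top (by omega)]
          congr 2
          omega
        rw [key]
        ring
      · have h1 : (m + 1) / 2 = k := by omega
        have h2 : m / 2 = k := by omega
        have h3 : (m + 1 - 1) / 2 = k := by omega
        have h4 : (m - 1) / 2 = k - 1 := by omega
        rw [h1, h2, h3, h4]
        obtain ⟨k', rfl⟩ : ∃ k', k = k' + 1 := ⟨k - 1, by omega⟩
        have key : ∑ x ∈ Icc 1 (k' + 1), f (2 * x + 1)
            = ∑ x ∈ Icc 1 (k' + 1 - 1), f (2 * x + 1) + f (m + 1) := by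
          rw [Finset.sum_Icc_succ_top (by omega)]
          congr 2
          omega
        rw [key]
        ring

lemma pair_sum (a : ℕ) : ∀ M : ℕ,
    ∑ j ∈ Icc 1 M, (Nat.choose a (2 * j - 2) + Nat.choose a (2 * j - 1))
      = ∑ i ∈ range (2 * M), Nat.choose a i
  | 0 => by simp
  | (M + 1) => by
      have e1 : 2 * (M + 1) - 2 = 2 * M := by omega
      have e2 : 2 * (M + 1) - 1 = 2 * M + 1 := by omega
      have e3 : 2 * (M + 1) = (2 * M + 1) + 1 := by omega
      rw [Finset.sum_Icc_succ_top (by omega), pair_sum a M, e1, e2, e3,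
        Finset.sum_range_succ, Finset.sum_range_succ]
      ring

lemma pair_sum_pow (a M : ℕ) (h : a < 2 * M) :
    ∑ j ∈ Icc 1 M, (Nat.choose a (2 * j - 2) + Nat.choose a (2 * j - 1)) = 2 ^ a := by
  rw [pair_sum, ← Nat.sum_range_choose a]
  symm
  apply Finset.sum_subset
  · intro x hx
    simp only [Finset.mem_range] at *
    omega
  · intro x _ hx
    simp only [Finset.mem_range, not_lt] at hx
    exact Nat.choose_eq_zero_of_lt (by omega)

lemma even_fam (n k : ℕ) (hn : 2 ≤ n) (hk : 1 ≤ k) (hk2 : k ≤ n / 2) :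
    Rcount n (2 * k) = ∑ j ∈ Icc 1 n,
      Nat.choose (j + k - 2) (2 * j - 2) * Nat.choose (n - j - k) (j + k - 2) := by
  rw [Rcount, if_pos ⟨k, two_mul k⟩]
  have hr : min (2 * k / 2) (n / 2 - (2 * k - 1) / 2) = min k (n / 2 - (k - 1)) := by
    congr 1 <;> omega
  rw [hr]
  have hc : ∀ j ∈ Icc 1 (min k (n / 2 - (k - 1))),
      Nat.choose (j + (2 * k - 1) / 2 - 1) (2 * j - 1 - 1) *
        Nat.choose (n - j - (2 * k + 1) / 2) (j + (2 * k - 1) / 2 - 1)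
      = Nat.choose (j + k - 2) (2 * j - 2) * Nat.choose (n - j - k) (j + k - 2) := by
    intro j hj
    simp only [mem_Icc] at hj
    congr 2 <;> omega
  rw [Finset.sum_congr rfl hc]
  apply Finset.sum_subset
  · intro x hx
    simp only [mem_Icc, le_min_iff, mem_Icc] at *
    omega
  · intro j hj hj'
    simp only [mem_Icc, not_and, not_le] at hj hj'
    have h1 : 1 ≤ j := hj.1
    have h2 : min k (n / 2 - (k - 1)) < j := hj' h1
    rcases Nat.lt_or_ge k j with hkj | hkj
    · rw [Nat.choose_eq_zero_of_lt (by omega), Nat.zero_mul]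
    · have : n / 2 - (k - 1) < j := by omega
      rw [Nat.choose_eq_zero_of_lt (show n - j - k < j + k - 2 by omega), Nat.mul_zero]

lemma odd_fam (n k : ℕ) (hn : 2 ≤ n) (hk : 1 ≤ k) :
    Rcount n (2 * k + 1) = ∑ j ∈ Icc 1 n,
      Nat.choose (j + k - 1) (2 * j - 1) * Nat.choose (n - j - k - 1) (j + k - 1) := by
  rw [Rcount, if_neg (by simp [Nat.even_add_one, parity_simps])]
  have hr : min ((2 * k + 1) / 2) (n / 2 - (2 * k + 1 - 1) / 2) = min k (n / 2 - k) := by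
    congr 1 <;> omega
  rw [hr]
  have hc : ∀ j ∈ Icc 1 (min k (n / 2 - k)),
      Nat.choose (j + (2 * k + 1 - 1) / 2 - 1) (2 * j - 0 - 1) *
        Nat.choose (n - j - (2 * k + 1 + 1) / 2) (j + (2 * k + 1 - 1) / 2 - 1)
      = Nat.choose (j + k - 1) (2 * j - 1) * Nat.choose (n - j - k - 1) (j + k - 1) := by
    intro j hj
    simp only [mem_Icc] at hj
    congr 2 <;> omega
  rw [Finset.sum_congr rfl hc]
  apply Finset.sum_subset
  · intro x hx
    simp only [mem_Icc, le_min_iff, mem_Icc] at *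
    omega
  · intro j hj hj'
    simp only [mem_Icc, not_and, not_le] at hj hj'
    have h1 : 1 ≤ j := hj.1
    have h2 : min k (n / 2 - k) < j := hj' h1
    rcases Nat.lt_or_ge k j with hkj | hkj
    · rw [Nat.choose_eq_zero_of_lt (by omega), Nat.zero_mul]
    · have : n / 2 - k < j := by omega
      rw [Nat.choose_eq_zero_of_lt (show n - j - k - 1 < j + k - 1 by omega), Nat.mul_zero]

lemma shift_core (F : ℕ → ℕ) (n d : ℕ)
    (hlow : ∀ a < d, F a = 0) (hhigh : ∀ a, n - 1 ≤ a → F a = 0) :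
    ∑ k ∈ Icc 1 n, F (k - 1 + d) = ∑ a ∈ range (n - 1), F a := by
  have h1 : ∑ k ∈ Icc 1 n, F (k - 1 + d) = ∑ i ∈ range n, F (d + i) := by
    rw [← Finset.Ico_add_one_right_eq_Icc, Finset.sum_Ico_eq_sum_range]
    apply Finset.sum_congr rfl
    intro i _
    congr 1
    omega
  have h2 : ∑ i ∈ range n, F (d + i) = ∑ a ∈ Ico d (d + n), F a := by
    rw [Finset.sum_Ico_eq_sum_range]
    apply Finset.sum_congr (by congr 1; omega) (fun _ _ => rfl)
  have h3 : ∑ a ∈ Ico d (d + n), F a = ∑ a ∈ range (d + n), F a := by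
    apply Finset.sum_subset
    · intro x hx
      simp only [mem_Ico, mem_range] at *
      omega
    · intro x hx hx'
      simp only [mem_Ico, mem_range, not_and, not_le, not_lt] at hx hx'
      exact hlow x (by omega)
  have h4 : ∑ a ∈ range (n - 1), F a = ∑ a ∈ range (d + n), F a := by
    apply Finset.sum_subset
    · intro x hx
      simp only [mem_range] at *
      omega
    · intro x hx hx'
      simp only [mem_range, not_lt] at hx hx'
      exact hhigh x (by omega)
  rw [h1, h2, h3, h4]

/-- For every `n ≥ 2`, the total count `T(n) = Σ_{s=2}^n R(n,s)` equals the
Jacobsthal number `J(n-1)`; equivalently `T(n) = (2^(n-1) - (-1)^(n-1))/3`. -/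
theorem Rcount_total_jacobsthal (n : ℕ) (hn : 2 ≤ n) :
    (∑ s ∈ Finset.Icc 2 n, Rcount n s) = jacobsthal (n - 1) ∧
      (3 * (∑ s ∈ Finset.Icc 2 n, Rcount n s) : ℤ) = 2 ^ (n - 1) - (-1) ^ (n - 1) := by
  have main : (∑ s ∈ Finset.Icc 2 n, Rcount n s) = jacobsthal (n - 1) := by
    rw [parity_split (Rcount n) n]
    -- even part
    have e1 : ∑ k ∈ Icc 1 (n / 2), Rcount n (2 * k)
        = ∑ k ∈ Icc 1 n, ∑ j ∈ Icc 1 n,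
            Nat.choose (j + k - 2) (2 * j - 2) * Nat.choose (n - j - k) (j + k - 2) := by
      rw [Finset.sum_congr rfl (fun k hk => by
        simp only [mem_Icc] at hk
        exact even_fam n k hn hk.1 hk.2)]
      apply Finset.sum_subset
      · intro x hx
        simp only [mem_Icc] at *
        omega
      · intro k hk hk'
        simp only [mem_Icc, not_and, not_le] at hk hk'
        apply Finset.sum_eq_zero
        intro j hj
        simp only [mem_Icc] at hj
        have : n / 2 < k := hk' hk.1
        rw [Nat.choose_eq_zero_of_lt (show n - j - k < j + k - 2 by omega), Nat.mul_zero]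
    have o1 : ∑ k ∈ Icc 1 ((n - 1) / 2), Rcount n (2 * k + 1)
        = ∑ k ∈ Icc 1 n, ∑ j ∈ Icc 1 n,
            Nat.choose (j + k - 1) (2 * j - 1) * Nat.choose (n - j - k - 1) (j + k - 1) := by
      rw [Finset.sum_congr rfl (fun k hk => by
        simp only [mem_Icc] at hk
        exact odd_fam n k hn hk.1)]
      apply Finset.sum_subset
      · intro x hx
        simp only [mem_Icc] at *
        omega
      · intro k hk hk'
        simp only [mem_Icc, not_and, not_le] at hk hk'
        apply Finset.sum_eq_zero
        intro j hj
        simp only [mem_Icc] at hj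
        have : (n - 1) / 2 < k := hk' hk.1
        rw [Nat.choose_eq_zero_of_lt (show n - j - k - 1 < j + k - 1 by omega), Nat.mul_zero]
    have c1 : ∑ k ∈ Icc 1 n, ∑ j ∈ Icc 1 n,
        Nat.choose (j + k - 2) (2 * j - 2) * Nat.choose (n - j - k) (j + k - 2)
        = ∑ j ∈ Icc 1 n, ∑ k ∈ Icc 1 n,
        Nat.choose (j + k - 2) (2 * j - 2) * Nat.choose (n - j - k) (j + k - 2) :=
      Finset.sum_comm
    have c2 : ∑ k ∈ Icc 1 n, ∑ j ∈ Icc 1 n,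
        Nat.choose (j + k - 1) (2 * j - 1) * Nat.choose (n - j - k - 1) (j + k - 1)
        = ∑ j ∈ Icc 1 n, ∑ k ∈ Icc 1 n,
        Nat.choose (j + k - 1) (2 * j - 1) * Nat.choose (n - j - k - 1) (j + k - 1) :=
      Finset.sum_comm
    rw [e1, o1, c1, c2]
    -- per j shifts
    have e2 : ∀ j ∈ Icc 1 n,
        ∑ k ∈ Icc 1 n, Nat.choose (j + k - 2) (2 * j - 2) * Nat.choose (n - j - k) (j + k - 2)
        = ∑ a ∈ range (n - 1), Nat.choose a (2 * j - 2) * Nat.choose (n - 2 - a) a := by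
      intro j hj
      simp only [mem_Icc] at hj
      have := shift_core (fun a => Nat.choose a (2 * j - 2) * Nat.choose (n - 2 - a) a) n (j - 1)
        (fun a ha => by
          simp [Nat.choose_eq_zero_of_lt (show a < 2 * j - 2 by omega)])
        (fun a ha => by
          simp [Nat.choose_eq_zero_of_lt (show n - 2 - a < a by omega)])
      rw [← this]
      apply Finset.sum_congr rfl
      intro k hk
      simp only [mem_Icc] at hk
      congr 2 <;> omega
    have o2 : ∀ j ∈ Icc 1 n,
        ∑ k ∈ Icc 1 n, Nat.choose (j + k - 1) (2 * j - 1) * Nat.choose (n - j - k - 1) (j + k - 1)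
        = ∑ a ∈ range (n - 1), Nat.choose a (2 * j - 1) * Nat.choose (n - 2 - a) a := by
      intro j hj
      simp only [mem_Icc] at hj
      have := shift_core (fun a => Nat.choose a (2 * j - 1) * Nat.choose (n - 2 - a) a) n j
        (fun a ha => by
          simp [Nat.choose_eq_zero_of_lt (show a < 2 * j - 1 by omega)])
        (fun a ha => by
          simp [Nat.choose_eq_zero_of_lt (show n - 2 - a < a by omega)])
      rw [← this]
      apply Finset.sum_congr rfl
      intro k hk
      simp only [mem_Icc] at hk
      congr 2 <;> omega
    rw [Finset.sum_congr rfl e2, Finset.sum_congr rfl o2, ← Finset.sum_add_distrib]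
    have e3 : ∀ j ∈ Icc 1 n,
        ((∑ a ∈ range (n - 1), Nat.choose a (2 * j - 2) * Nat.choose (n - 2 - a) a)
          + ∑ a ∈ range (n - 1), Nat.choose a (2 * j - 1) * Nat.choose (n - 2 - a) a)
        = ∑ a ∈ range (n - 1),
            (Nat.choose a (2 * j - 2) + Nat.choose a (2 * j - 1)) * Nat.choose (n - 2 - a) a := by
      intro j _
      rw [← Finset.sum_add_distrib]
      apply Finset.sum_congr rfl
      intro a _
      ring
    rw [Finset.sum_congr rfl e3, Finset.sum_comm]
    have e4 : ∀ a ∈ range (n - 1),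
        ∑ j ∈ Icc 1 n,
            (Nat.choose a (2 * j - 2) + Nat.choose a (2 * j - 1)) * Nat.choose (n - 2 - a) a
        = 2 ^ a * Nat.choose (n - 2 - a) a := by
      intro a ha
      simp only [mem_range] at ha
      rw [← Finset.sum_mul, pair_sum_pow a n (by omega)]
    rw [Finset.sum_congr rfl e4, ← jac_sum (n - 1)]
    apply Finset.sum_congr rfl
    intro a _
    have h : n - 2 - a = n - 1 - 1 - a := by omega
    rw [h]
  refine ⟨main, ?_⟩
  rw [main, jac_int]
end

section
/- For every n ≥ 1 and every k with 1 ≤ k ≤ n, RS(2n, 2k) = C(n-1, k-1), where RS(n,s) is the symmetric R-decomposition count defined by the explicit formula in the context. Consequently Σ_{k=1}^{n} RS(2n,2k) = 2^{n-1}. -/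
open Finset

/-! For `2n` crossings the parity indicator is always `1`. Writing `i = ⌊(j+k)/2⌋ - 1` and
splitting the sum according to the parity of `j + k` turns `RS(2n, 2k)` into
`fibCoeff (n-1) (k-1) + fibCoeff (n-2) (k-2)`, where `fibCoeff N K` is the coefficient of `x^K`
in `F_N(x(1+x))` and `F_N(y) = ∑ᵢ C(N-i, i) yⁱ` is the Fibonacci polynomial. At `y = x(1+x)` the
Fibonacci recurrence `F_{N+2} = F_{N+1} + y F_N` has characteristic roots `1+x` and `-x`, so
`F_{N+1} + x F_N = (1+x)^{N+1}`; comparing coefficients of `x^{K+1}` gives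
`fibCoeff (N+1) (K+1) + fibCoeff N K = C(N+1, K+1)`. -/

def fibCoeff (N K : ℕ) : ℕ :=
  ∑ p ∈ antidiagonal K, p.1.choose p.2 * (N - p.1).choose p.1

lemma fibCoeff_eq_sum_range (N K : ℕ) :
    fibCoeff N K = ∑ i ∈ range (K + 1), i.choose (K - i) * (N - i).choose i :=
  Nat.sum_antidiagonal_eq_sum_range_succ (fun i r => i.choose r * (N - i).choose i) K

lemma fibCoeff_zero_left (K : ℕ) : fibCoeff 0 K = (0 : ℕ).choose K := by
  cases K <;> simp [fibCoeff, Nat.sum_antidiagonal_succ]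

lemma fibCoeff_one_succ (K : ℕ) : fibCoeff 1 (K + 1) = 0 := by
  cases K <;> simp [fibCoeff, Nat.sum_antidiagonal_succ]

lemma fibCoeff_zero_right (N : ℕ) : fibCoeff N 0 = 1 := by
  simp [fibCoeff]

lemma fibCoeff_one_right (N : ℕ) : fibCoeff (N + 1) 1 = N := by
  simp [fibCoeff, Nat.sum_antidiagonal_succ]

lemma choose_add_one_sub_eq_add (M t : ℕ) :
    (M + 1 - t).choose (t + 1) = (M - t).choose (t + 1) + (M - t).choose t := by
  rcases le_or_gt t M with h | h
  · rw [Nat.sub_add_comm h, Nat.choose_succ_succ', add_comm]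
  · rw [Nat.sub_eq_zero_of_le h, Nat.sub_eq_zero_of_le h.le, Nat.choose_zero_succ,
      Nat.choose_eq_zero_of_lt (Nat.zero_lt_of_lt h), zero_add]

lemma fibCoeff_add_two (M K : ℕ) :
    fibCoeff (M + 2) (K + 2) = fibCoeff (M + 1) (K + 2) + fibCoeff M (K + 1) + fibCoeff M K := by
  have peel : ∀ L, fibCoeff (L + 1) (K + 2) =
      ∑ p ∈ antidiagonal (K + 1), (p.1 + 1).choose p.2 * (L - p.1).choose (p.1 + 1) := by
    intro L
    simp [fibCoeff, Nat.sum_antidiagonal_succ]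
  have pascal_top : ∀ p ∈ antidiagonal (K + 1),
      (p.1 + 1).choose p.2 * (M + 1 - p.1).choose (p.1 + 1) =
        (p.1 + 1).choose p.2 * (M - p.1).choose (p.1 + 1) +
          (p.1 + 1).choose p.2 * (M - p.1).choose p.1 := by
    intro p _
    rw [choose_add_one_sub_eq_add, mul_add]
  have pascal_left : ∑ p ∈ antidiagonal (K + 1), (p.1 + 1).choose p.2 * (M - p.1).choose p.1 =
      fibCoeff M (K + 1) + fibCoeff M K := by
    simp only [Nat.sum_antidiagonal_succ', fibCoeff, Nat.choose_succ_succ', add_mul,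
      sum_add_distrib, Nat.choose_zero_right]
    ring
  rw [peel, peel, sum_congr rfl pascal_top, sum_add_distrib, pascal_left, add_assoc]

lemma fibCoeff_succ_add_fibCoeff (N K : ℕ) :
    fibCoeff (N + 1) (K + 1) + fibCoeff N K = (N + 1).choose (K + 1) := by
  induction N generalizing K with
  | zero =>
    rw [fibCoeff_one_succ, fibCoeff_zero_left, zero_add, Nat.choose_succ_succ,
      Nat.choose_zero_succ, add_zero]
  | succ N ih =>
    cases K with
    | zero => simp [fibCoeff_one_right, fibCoeff_zero_right]
    | succ K =>
      rw [fibCoeff_add_two, Nat.choose_succ_succ' (N + 1), ← ih, ← ih]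
      ring

lemma sum_range_two_mul_add_one {M : Type*} [AddCommMonoid M] (f : ℕ → M) (m : ℕ) :
    ∑ r ∈ range (2 * m + 1), f r = ∑ i ∈ range (m + 1), f (2 * i) + ∑ i ∈ range m, f (2 * i + 1) := by
  induction m with
  | zero => simp
  | succ m ih =>
    simp only [mul_add, mul_one, sum_range_succ _ (2 * m + 2), sum_range_succ _ (2 * m + 1), ih,
      sum_range_succ _ (m + 1), sum_range_succ _ m]
    abel

lemma RScount_two_mul_eq_sum_Icc {n k : ℕ} (hkn : k ≤ n) :
    RScount (2 * n) (2 * k) = ∑ j ∈ Icc 1 k,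
      ((j + k) / 2 - 1).choose (j - 1) * (n - (j + k + 1) / 2).choose ((j + k) / 2 - 1) := by
  have parity : ∀ j, Even ((j + k) * (2 * n)) := fun j => (even_two_mul n).mul_left _
  simp only [RScount, even_two_mul, if_true, Nat.mul_div_cancel_left _ two_pos, parity, one_mul]
  refine sum_subset (Icc_subset_Icc_right (min_le_left _ _)) fun j hj hj' => ?_
  simp only [mem_Icc, le_min_iff, not_and, not_le] at hj hj'
  rw [Nat.choose_eq_zero_of_lt (n := n - (j + k + 1) / 2) (by omega), mul_zero]

lemma sum_Icc_choose_eq_fibCoeff (n K : ℕ) :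
    ∑ j ∈ Icc 1 (K + 2), ((j + (K + 2)) / 2 - 1).choose (j - 1) *
        (n - (j + (K + 2) + 1) / 2).choose ((j + (K + 2)) / 2 - 1) =
      fibCoeff (n - 1) (K + 1) + fibCoeff (n - 2) K := by
  -- `h r` is the term with `j + K + 2 = r + 2`, read as a term of `fibCoeff (n - 1) (K + 1)` or of
  -- `fibCoeff (n - 2) K` according to the parity of `r`.
  set h : ℕ → ℕ := fun r => (r / 2).choose (K + 1 - r % 2 - r / 2) *
    (n - 1 - r % 2 - r / 2).choose (r / 2) with h_def
  have split_parity : fibCoeff (n - 1) (K + 1) + fibCoeff (n - 2) K =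
      ∑ r ∈ range (2 * (K + 1) + 1), h r := by
    rw [sum_range_two_mul_add_one, fibCoeff_eq_sum_range, fibCoeff_eq_sum_range]
    congr 1 <;> refine sum_congr rfl fun i _ => ?_ <;> simp only [h_def] <;>
      congr 2 <;> omega
  have low_vanish : ∑ r ∈ range (K + 1), h r = 0 :=
    sum_eq_zero fun r hr => by
      simp only [h_def]
      rw [Nat.choose_eq_zero_of_lt (by rw [mem_range] at hr; omega), zero_mul]
  rw [split_parity, show 2 * (K + 1) + 1 = (K + 1) + (K + 2) by ring, sum_range_add, low_vanish,
    zero_add, ← Ico_add_one_right_eq_Icc, sum_Ico_eq_sum_range, Nat.add_sub_cancel]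
  refine sum_congr rfl fun r hr => ?_
  rw [mem_range] at hr
  simp only [h_def]
  rw [Nat.choose_symm_of_eq_add (show (1 + r + (K + 2)) / 2 - 1 =
    (1 + r - 1) + (K + 1 - (K + 1 + r) % 2 - (K + 1 + r) / 2) by omega)]
  congr 2 <;> omega

lemma RScount_two_mul_eq_choose {n k : ℕ} (hk : 1 ≤ k) (hkn : k ≤ n) :
    RScount (2 * n) (2 * k) = (n - 1).choose (k - 1) := by
  rw [RScount_two_mul_eq_sum_Icc hkn]
  obtain rfl | hk2 := hk.eq_or_lt
  · simp
  · obtain ⟨K, rfl⟩ := Nat.exists_eq_add_of_le' hk2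
    obtain ⟨N, rfl⟩ := Nat.exists_eq_add_of_le' (hk2.trans_le hkn)
    simpa [sum_Icc_choose_eq_fibCoeff] using fibCoeff_succ_add_fibCoeff N K

lemma sum_Icc_choose_sub_one (m : ℕ) : ∑ k ∈ Icc 1 (m + 1), m.choose (k - 1) = 2 ^ m := by
  rw [← Nat.sum_range_choose, ← Ico_add_one_right_eq_Icc, sum_Ico_eq_sum_range]
  simp [add_comm 1]

/-- For every `n ≥ 1` and every `k` with `1 ≤ k ≤ n`, `RS(2n, 2k) = C(n-1, k-1)`;
consequently `Σ_{k=1}^n RS(2n, 2k) = 2^(n-1)`. -/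
theorem RScount_even_binomial (n : ℕ) (hn : 1 ≤ n) :
    (∀ k, 1 ≤ k → k ≤ n → RScount (2 * n) (2 * k) = Nat.choose (n - 1) (k - 1)) ∧
      (∑ k ∈ Finset.Icc 1 n, RScount (2 * n) (2 * k)) = 2 ^ (n - 1) := by
  refine ⟨fun k hk hkn => RScount_two_mul_eq_choose hk hkn, ?_⟩
  obtain ⟨m, rfl⟩ := Nat.exists_eq_add_of_le' hn
  rw [sum_congr rfl fun k hk => RScount_two_mul_eq_choose (mem_Icc.1 hk).1 (mem_Icc.1 hk).2]
  simpa using sum_Icc_choose_sub_one m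
end

section
/- For every n ≥ 1, the odd-crossing symmetric count satisfies Σ_{k} RS(2n+1, 2k) = (2^n - (-1)^n)/3, i.e., the total number of symmetric R-decompositions with 2n+1 crossings equals the Jacobsthal number J(n). -/
open Finset

/-- auxiliary: the Jacobsthal-type sum -/
def gJ (n : ℕ) : ℕ := ∑ i ∈ Finset.range n, 2 ^ i * Nat.choose (n - 1 - i) i

lemma gJ_rec (n : ℕ) : gJ (n + 2) = gJ (n + 1) + 2 * gJ n := by
  have h2 : gJ (n + 2) = ∑ i ∈ Finset.range n, 2 ^ (i+1) *
      (Nat.choose (n - 1 - i) i + Nat.choose (n - 1 - i) (i+1)) + 1 := by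
    unfold gJ
    rw [Finset.sum_range_succ]
    have h0 : Nat.choose (n + 2 - 1 - (n+1)) (n+1) = 0 := by
      simp [Nat.choose_eq_zero_of_lt]
    rw [h0, mul_zero, add_zero, Finset.sum_range_succ']
    simp only [pow_zero, one_mul, Nat.choose_zero_right]
    congr 1
    apply Finset.sum_congr rfl
    intro i hi
    have hi' : i < n := Finset.mem_range.mp hi
    have he : n + 2 - 1 - (i+1) = (n - 1 - i) + 1 := by omega
    rw [he, Nat.choose_succ_succ']
  have h1 : gJ (n + 1) = ∑ i ∈ Finset.range n, 2 ^ (i+1) *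
      Nat.choose (n - 1 - i) (i+1) + 1 := by
    unfold gJ
    rw [Finset.sum_range_succ']
    simp only [pow_zero, one_mul, Nat.choose_zero_right]
    congr 1
    apply Finset.sum_congr rfl
    intro i hi
    have : n + 1 - 1 - (i+1) = n - 1 - i := by omega
    rw [this]
  have h3 : 2 * gJ n = ∑ i ∈ Finset.range n, 2 ^ (i+1) * Nat.choose (n - 1 - i) i := by
    unfold gJ
    rw [Finset.mul_sum]
    apply Finset.sum_congr rfl
    intro i _
    ring
  rw [h2, h1, h3]
  simp only [mul_add, Finset.sum_add_distrib]
  omega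

lemma gJ_jac : ∀ n : ℕ, (3 * gJ n : ℤ) = 2 ^ n - (-1) ^ n
  | 0 => by simp [gJ]
  | 1 => by simp [gJ]
  | (n + 2) => by
      have h1 := gJ_jac (n + 1)
      have h2 := gJ_jac n
      rw [gJ_rec]
      push_cast
      push_cast at h1 h2
      ring_nf
      ring_nf at h1 h2
      linarith

/-- For every `n ≥ 1`, the total number of symmetric R-decompositions with
`2n+1` crossings equals the Jacobsthal number `J(n) = (2^n - (-1)^n)/3`.
The sum ranges over all `k` with `2 ≤ 2k ≤ 2n+1`, i.e. `1 ≤ k ≤ n`.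
The identity is stated multiplied by `3`. -/
theorem RScount_odd_total (n : ℕ) (hn : 1 ≤ n) :
    (3 * (∑ k ∈ Finset.Icc 1 n, RScount (2 * n + 1) (2 * k)) : ℤ) =
      2 ^ n - (-1) ^ n := by
  have key : ∑ k ∈ Finset.Icc 1 n, RScount (2 * n + 1) (2 * k) = gJ n := by
    have hRS : ∀ k ∈ Finset.Icc 1 n, RScount (2 * n + 1) (2 * k) =
        ∑ j ∈ Finset.Icc 1 n, if ((j ≤ k ∧ j + k ≤ n + 1) ∧ Even (j + k)) then
          Nat.choose ((j + k) / 2 - 1) (j - 1) *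
            Nat.choose (n - (j + k) / 2) ((j + k) / 2 - 1) else 0 := by
      intro k hk
      rw [Finset.mem_Icc] at hk
      rw [RScount, if_pos (even_two_mul k)]
      have e1 : 2 * k / 2 = k := by omega
      have e2 : (2 * n + 1) / 2 = n := by omega
      rw [e1, e2]
      have hset : Finset.Icc 1 (min k (n + 1 - k)) =
          (Finset.Icc 1 n).filter (fun j => j ≤ k ∧ j + k ≤ n + 1) := by
        ext j
        simp only [Finset.mem_Icc, Finset.mem_filter]
        omega
      rw [hset, Finset.sum_filter]
      apply Finset.sum_congr rfl
      intro j hj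
      have hpar : Even ((j + k) * (2 * n + 1)) ↔ Even (j + k) := by
        rw [Nat.even_mul]
        have : ¬ Even (2 * n + 1) := by simp [Nat.even_iff]
        tauto
      by_cases h1 : (j ≤ k ∧ j + k ≤ n + 1)
      · rw [if_pos h1]
        by_cases h2 : Even (j + k)
        · rw [if_pos (hpar.mpr h2), if_pos ⟨h1, h2⟩, one_mul]
          obtain ⟨r, hr⟩ := h2
          have e3 : (j + k + 1) / 2 = (j + k) / 2 := by omega
          rw [e3]
        · rw [if_neg (fun hc => h2 (hpar.mp hc)),
            if_neg (fun hc => h2 hc.2), zero_mul]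
      · rw [if_neg h1, if_neg (fun hc => h1 hc.1)]
    rw [Finset.sum_congr rfl hRS, ← Finset.sum_product']
    rw [← Finset.sum_filter]
    rw [Finset.sum_nbij' (i := fun p => ((p.2 + p.1) / 2, p.2))
      (j := fun p => (2 * p.1 - p.2, p.2))
      (t := (Finset.Icc 1 n ×ˢ Finset.Icc 1 n).filter
        (fun p => 2 * p.1 ≤ n + 1 ∧ p.2 ≤ p.1))
      (g := fun p => Nat.choose (p.1 - 1) (p.2 - 1) * Nat.choose (n - p.1) (p.1 - 1))
      ?_ ?_ ?_ ?_ ?_]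
    · rw [Finset.sum_filter, Finset.sum_product]
      have hin : ∀ m ∈ Finset.Icc 1 n,
          (∑ j ∈ Finset.Icc 1 n, if 2 * m ≤ n + 1 ∧ j ≤ m then
            Nat.choose (m - 1) (j - 1) * Nat.choose (n - m) (m - 1) else 0) =
          2 ^ (m - 1) * Nat.choose (n - m) (m - 1) := by
        intro m hm
        rw [Finset.mem_Icc] at hm
        by_cases hle : 2 * m ≤ n + 1
        · have hset2 : (Finset.Icc 1 n).filter (fun j => 2 * m ≤ n + 1 ∧ j ≤ m)
              = Finset.Icc 1 m := by
            ext j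
            simp only [Finset.mem_Icc, Finset.mem_filter]
            omega
          rw [← Finset.sum_filter, hset2, ← Finset.sum_mul]
          congr 1
          rw [← Finset.Ico_add_one_right_eq_Icc, Finset.sum_Ico_eq_sum_range]
          have em : m + 1 - 1 = (m - 1) + 1 := by omega
          rw [em, ← Nat.sum_range_choose (m - 1)]
          apply Finset.sum_congr rfl
          intro i _
          congr 1
          omega
        · have hz : Nat.choose (n - m) (m - 1) = 0 :=
            Nat.choose_eq_zero_of_lt (by omega)
          rw [hz, mul_zero]
          apply Finset.sum_eq_zero
          intro j _
          rw [if_neg (fun hc => hle hc.1)]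
      rw [Finset.sum_congr rfl hin]
      unfold gJ
      rw [← Finset.Ico_add_one_right_eq_Icc, Finset.sum_Ico_eq_sum_range]
      apply Finset.sum_congr (by congr 1)
      intro i _
      have e4 : 1 + i - 1 = i := by omega
      have e5 : n - (1 + i) = n - 1 - i := by omega
      rw [e4, e5]
    · intro p hp
      simp only [Finset.mem_filter, Finset.mem_product, Finset.mem_Icc,
        Nat.even_iff] at hp ⊢
      omega
    · intro p hp
      simp only [Finset.mem_filter, Finset.mem_product, Finset.mem_Icc,
        Nat.even_iff] at hp ⊢
      omega
    · intro p hp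
      simp only [Finset.mem_filter, Finset.mem_product, Finset.mem_Icc,
        Nat.even_iff] at hp
      have : 2 * ((p.2 + p.1) / 2) - p.2 = p.1 := by omega
      simp [this]
    · intro p hp
      simp only [Finset.mem_filter, Finset.mem_product, Finset.mem_Icc,
        Nat.even_iff] at hp
      have : (p.2 + (2 * p.1 - p.2)) / 2 = p.1 := by omega
      simp [this]
    · intro p hp
      simp only [Finset.mem_filter, Finset.mem_product, Finset.mem_Icc,
        Nat.even_iff] at hp
      rfl
  rw [key]; exact gJ_jac n
end

section
/- For every n ≥ 2 and every s with 2 ≤ s ≤ n, RS(n,s) ≤ R(n,s), where R and RS are the explicit binomial sums defined in the context. -/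
/-!
Only even `s = 2k` matter. After normalising the truncated arithmetic, both sums run over
`1 ≤ j ≤ min k (⌊n/2⌋ + 1 - k)`, and the `j`-th term of `R(n, 2k)` is
`C(j+k-2, 2j-2) · C(n-j-k, j+k-2)`. Each binomial factor of the `j`-th term of `RS` is
dominated by the corresponding factor of `R` through `C(p, q) ≤ C(2p + r, 2q + r)`
(Vandermonde, then Pascal) and monotonicity of `C(·, q)`; for the second factor the parity
indicator of `RS` is exactly what is needed when `j + k` is odd.
-/

open Finset

-- Vandermonde: `C(2p, 2q) = ∑ C(p, a) C(p, 2q - a)` contains the term `C(p, q)²`.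
theorem Nat.choose_le_choose_two_mul (p q : ℕ) : p.choose q ≤ (2 * p).choose (2 * q) := by
  rcases le_or_gt q p with hqp | hpq
  · calc p.choose q ≤ p.choose q * p.choose q := Nat.le_mul_of_pos_left _ (Nat.choose_pos hqp)
      _ ≤ ∑ ij ∈ antidiagonal (2 * q), p.choose ij.1 * p.choose ij.2 :=
          single_le_sum (f := fun ij : ℕ × ℕ => p.choose ij.1 * p.choose ij.2) (a := (q, q))
            (fun _ _ => Nat.zero_le _) (mem_antidiagonal.mpr (two_mul q).symm)
      _ = (2 * p).choose (2 * q) := by rw [two_mul p, Nat.add_choose_eq]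
  · simp [Nat.choose_eq_zero_of_lt hpq]

theorem Nat.choose_le_choose_add_add (m c r : ℕ) : m.choose c ≤ (m + r).choose (c + r) := by
  induction r with
  | zero => rfl
  | succ r ih =>
    rw [← add_assoc, ← add_assoc, Nat.choose_succ_succ']
    exact ih.trans (Nat.le_add_right _ _)

theorem RScount_term_le_Rcount_term {n k j : ℕ} (hj : 1 ≤ j) (hk : 1 ≤ k)
    (hjk : j + k ≤ n / 2 + 1) (hpar : Even ((j + k) * n)) :
    ((j + k) / 2 - 1).choose (j - 1) * (n / 2 - (j + k + 1) / 2).choose ((j + k) / 2 - 1) ≤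
      (j + k - 2).choose (2 * j - 2) * (n - j - k).choose (j + k - 2) := by
  -- If `j + k` is odd then `n` is even, so `2 (⌊n/2⌋ - ⌈(j+k)/2⌉) + 1 ≤ n - j - k` still holds.
  have hpar' : (j + k) % 2 = 0 ∨ n % 2 = 0 :=
    (Nat.even_mul.mp hpar).imp Nat.even_iff.mp Nat.even_iff.mp
  set r := (j + k) % 2
  gcongr ?_ * ?_
  · calc ((j + k) / 2 - 1).choose (j - 1)
        ≤ (2 * ((j + k) / 2 - 1)).choose (2 * (j - 1)) := Nat.choose_le_choose_two_mul _ _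
      _ ≤ (j + k - 2).choose (2 * (j - 1)) := Nat.choose_le_choose _ (by omega)
      _ = (j + k - 2).choose (2 * j - 2) := by rw [Nat.mul_sub_one]
  · calc (n / 2 - (j + k + 1) / 2).choose ((j + k) / 2 - 1)
        ≤ (2 * (n / 2 - (j + k + 1) / 2)).choose (2 * ((j + k) / 2 - 1)) :=
          Nat.choose_le_choose_two_mul _ _
      _ ≤ (2 * (n / 2 - (j + k + 1) / 2) + r).choose (2 * ((j + k) / 2 - 1) + r) :=
          Nat.choose_le_choose_add_add _ _ _
      _ ≤ (n - j - k).choose (2 * ((j + k) / 2 - 1) + r) := Nat.choose_le_choose _ (by omega)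
      _ = (n - j - k).choose (j + k - 2) := by congr 1; omega

theorem Rcount_two_mul (n k : ℕ) :
    Rcount n (2 * k) = ∑ j ∈ Icc 1 (min k (n / 2 + 1 - k)),
      (j + k - 2).choose (2 * j - 2) * (n - j - k).choose (j + k - 2) := by
  have hbound : min (2 * k / 2) (n / 2 - (2 * k - 1) / 2) = min k (n / 2 + 1 - k) := by omega
  rw [Rcount, hbound]
  refine sum_congr rfl fun j hj => ?_
  rw [mem_Icc] at hj
  simp only [even_two_mul, if_true]
  congr 2 <;> omega

theorem RScount_two_mul (n k : ℕ) :
    RScount n (2 * k) = ∑ j ∈ Icc 1 (min k (n / 2 + 1 - k)),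
      (if Even ((j + k) * n) then 1 else 0) *
        (((j + k) / 2 - 1).choose (j - 1) *
          (n / 2 - (j + k + 1) / 2).choose ((j + k) / 2 - 1)) := by
  simp only [RScount, even_two_mul, if_true, Nat.mul_div_cancel_left k two_pos]

theorem RScount_le_Rcount_general (n s : ℕ) :
    RScount n s ≤ Rcount n s := by
  by_cases hs : Even s
  · obtain ⟨k, rfl⟩ := hs.two_dvd
    rw [RScount_two_mul, Rcount_two_mul]
    refine sum_le_sum fun j hj => ?_
    rw [mem_Icc] at hj
    split_ifs with hpar
    · rw [one_mul]
      exact RScount_term_le_Rcount_term hj.1 (by omega) (by omega) hpar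
    · rw [zero_mul]
      exact Nat.zero_le _
  · simp [RScount, hs]

/-- For every `n ≥ 2` and every `s` with `2 ≤ s ≤ n`, `RS(n,s) ≤ R(n,s)`:
the symmetric R-decompositions form a subset of all type I/III R-decompositions. -/
theorem RScount_le_Rcount (n s : ℕ) (hn : 2 ≤ n) (hs2 : 2 ≤ s) (hsn : s ≤ n) :
    RScount n s ≤ Rcount n s :=
  RScount_le_Rcount_general n s
end

section
/- Define the number of rational knots of crossing number n and genus g by Ψ(n,g) = R(n, n+1-2g) + RS(n, n+1-2g) (with R and RS as in the context). Then for every n ≥ 3, Σ_{g=1}^{⌊(n-1)/2⌋} Ψ(n,g) = RK(n), where RK(n) = (1/3)(2^{n-2} + ε_odd(n)·2^{(n-1)/2} - (1-ε_odd(n)) + 1 - (-1)^{⌊n/2⌋ n}) and ε_odd(n) = 1 if n is odd, 0 otherwise. -/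
open Finset

/-- `R(n,s)` extended by zero outside the range `2 ≤ s ≤ n`. -/
def Rz (n s : ℕ) : ℕ := if 2 ≤ s ∧ s ≤ n then Rcount n s else 0

/-- `RS(n,s)` extended by zero outside the range `2 ≤ s ≤ n`. -/
def RSz (n s : ℕ) : ℕ := if 2 ≤ s ∧ s ≤ n then RScount n s else 0

/-- `Ψ(n,g) = R(n, n+1-2g) + RS(n, n+1-2g)`, the number of rational knots with
crossing number `n` and genus `g`. -/
def Psi (n g : ℕ) : ℕ := Rz n (n + 1 - 2 * g) + RSz n (n + 1 - 2 * g)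


def Lsum (N : ℕ) : ℕ := ∑ m ∈ Finset.range (N + 1), Nat.choose (N - m) m * 2 ^ m

lemma Lsum_rec (N : ℕ) : Lsum (N + 2) = Lsum (N + 1) + 2 * Lsum N := by
  have h2 : Lsum (N + 1) = 1 + ∑ m ∈ range (N + 1), Nat.choose (N - m) (m + 1) * 2 ^ (m + 1) := by
    rw [Lsum, Finset.sum_range_succ', add_comm]
    congr 1
    · apply Finset.sum_congr rfl
      intro m hm
      have : N + 1 - (m + 1) = N - m := by omega
      rw [this]
  have h3 : Lsum (N + 2) = 1 + ∑ m ∈ range (N + 2), Nat.choose (N + 1 - m) (m + 1) * 2 ^ (m + 1) := by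
    rw [Lsum, Finset.sum_range_succ', add_comm]
    congr 1
    · apply Finset.sum_congr rfl
      intro m hm
      have : N + 2 - (m + 1) = N + 1 - m := by omega
      rw [this]
  have hp : ∀ m ∈ range (N + 2), Nat.choose (N + 1 - m) (m + 1) * 2 ^ (m + 1)
      = Nat.choose (N - m) (m + 1) * 2 ^ (m + 1) + Nat.choose (N - m) m * 2 * 2 ^ m := by
    intro m hm
    simp only [mem_range] at hm
    rcases le_or_gt m N with h | h
    · have : N + 1 - m = (N - m) + 1 := by omega
      rw [this, Nat.choose_succ_succ']
      ring
    · have hm' : m = N + 1 := by omega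
      subst hm'
      rw [show N + 1 - (N + 1) = 0 by omega, show N - (N + 1) = 0 by omega]
      simp
  rw [h3, Finset.sum_congr rfl hp, Finset.sum_add_distrib]
  have hA : ∑ m ∈ range (N + 2), Nat.choose (N - m) (m + 1) * 2 ^ (m + 1)
      = ∑ m ∈ range (N + 1), Nat.choose (N - m) (m + 1) * 2 ^ (m + 1) := by
    rw [Finset.sum_range_succ, Nat.choose_eq_zero_of_lt (by omega)]
    simp
  have hB : ∑ m ∈ range (N + 2), Nat.choose (N - m) m * 2 * 2 ^ m = 2 * Lsum N := by
    rw [Finset.sum_range_succ, Nat.choose_eq_zero_of_lt (by omega)]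
    simp only [zero_mul, mul_zero, add_zero, Lsum, Finset.mul_sum]
    apply Finset.sum_congr rfl
    intro m hm
    ring
  rw [hA, hB, h2]
  ring

lemma Lsum_val (N : ℕ) : (3 * Lsum N : ℤ) = 2 ^ (N + 1) + (-1) ^ N := by
  induction N using Nat.twoStepInduction with
  | zero => norm_num [Lsum]
  | one => norm_num [Lsum, Finset.sum_range_succ]
  | more N ih1 ih2 =>
    rw [Lsum_rec]
    push_cast
    push_cast at ih1 ih2
    have : (3:ℤ) * (↑(Lsum (N+1)) + 2 * ↑(Lsum N)) = 3 * ↑(Lsum (N+1)) + 2 * (3 * ↑(Lsum N)) := by ring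
    rw [this, ih1, ih2]
    ring

lemma sum_choose_row (p : ℕ) (hp : 1 ≤ p) :
    ∑ j ∈ Icc 1 p, Nat.choose (p - 1) (j - 1) = 2 ^ (p - 1) := by
  rw [← Nat.sum_range_choose (p - 1)]
  apply Finset.sum_nbij' (fun j => j - 1) (fun i => i + 1)
  · intro a ha; simp only [mem_Icc] at ha; simp only [mem_range]; omega
  · intro a ha; simp only [mem_range] at ha; simp only [mem_Icc]; omega
  · intro a ha; simp only [mem_Icc] at ha; omega
  · intro a ha; simp only [mem_range] at ha; omega
  · intro a ha; rfl

lemma halves (m : ℕ) (hm : 1 ≤ m) :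
    (∑ i ∈ (range (m + 1)).filter (fun i => i % 2 = 1), Nat.choose m i = 2 ^ (m - 1)) ∧
    (∑ i ∈ (range (m + 1)).filter (fun i => i % 2 = 0), Nat.choose m i = 2 ^ (m - 1)) := by
  set E := ∑ i ∈ (range (m + 1)).filter (fun i => i % 2 = 0), Nat.choose m i with hE
  set O := ∑ i ∈ (range (m + 1)).filter (fun i => i % 2 = 1), Nat.choose m i with hO
  have hfc : (range (m + 1)).filter (fun i => ¬ i % 2 = 0)
      = (range (m + 1)).filter (fun i => i % 2 = 1) := by
    apply Finset.filter_congr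
    intro x _
    constructor <;> omega
  have hEO : E + O = 2 ^ m := by
    rw [hE, hO, ← hfc, Finset.sum_filter_add_sum_filter_not, Nat.sum_range_choose]
  have halt := Int.alternating_sum_range_choose_of_ne (n := m) (by omega)
  rw [← Finset.sum_filter_add_sum_filter_not (range (m + 1)) (fun i => i % 2 = 0)] at halt
  have h1 : ∑ i ∈ (range (m + 1)).filter (fun i => i % 2 = 0), ((-1 : ℤ) ^ i * Nat.choose m i)
      = (E : ℤ) := by
    rw [hE]
    push_cast
    apply Finset.sum_congr rfl
    intro i hi
    simp only [mem_filter] at hi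
    rw [Even.neg_one_pow (Nat.even_iff.mpr hi.2), one_mul]
  have h2 : ∑ i ∈ (range (m + 1)).filter (fun i => ¬ i % 2 = 0), ((-1 : ℤ) ^ i * Nat.choose m i)
      = -(O : ℤ) := by
    rw [hO, hfc]
    push_cast
    rw [← Finset.sum_neg_distrib]
    apply Finset.sum_congr rfl
    intro i hi
    simp only [mem_filter] at hi
    rw [Odd.neg_one_pow (Nat.odd_iff.mpr hi.2)]
    ring
  rw [h1, h2] at halt
  have hEeqO : E = O := by
    have : (E : ℤ) = (O : ℤ) := by omega
    exact_mod_cast this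
  have hpow : 2 ^ m = 2 * 2 ^ (m - 1) := by
    rw [← pow_succ']
    congr 1
    omega
  constructor <;> omega

lemma sum_choose_odd (m : ℕ) (hm : 1 ≤ m) :
    ∑ j ∈ Icc 1 ((m + 1) / 2), Nat.choose m (2 * j - 1) = 2 ^ (m - 1) := by
  rw [← (halves m hm).1]
  apply Finset.sum_nbij' (fun j => 2 * j - 1) (fun i => (i + 1) / 2)
  · intro a ha; simp only [mem_Icc] at ha; simp only [mem_filter, mem_range]; omega
  · intro a ha; simp only [mem_filter, mem_range] at ha; simp only [mem_Icc]; omega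
  · intro a ha; simp only [mem_Icc] at ha; omega
  · intro a ha; simp only [mem_filter, mem_range] at ha; omega
  · intro a ha; rfl

lemma sum_choose_even (m : ℕ) (hm : 1 ≤ m) :
    ∑ j ∈ Icc 1 (m / 2 + 1), Nat.choose m (2 * j - 2) = 2 ^ (m - 1) := by
  rw [← (halves m hm).2]
  apply Finset.sum_nbij' (fun j => 2 * j - 2) (fun i => i / 2 + 1)
  · intro a ha; simp only [mem_Icc] at ha; simp only [mem_filter, mem_range]; omega
  · intro a ha; simp only [mem_filter, mem_range] at ha; simp only [mem_Icc]; omega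
  · intro a ha; simp only [mem_Icc] at ha; omega
  · intro a ha; simp only [mem_filter, mem_range] at ha; omega
  · intro a ha; rfl

private theorem even_case (n : ℕ) (hn : 3 ≤ n) (he : Even n) :
    (3 * (∑ g ∈ Finset.Icc 1 ((n - 1) / 2), Psi n g) : ℤ) =
      2 ^ (n - 2) + (if Odd n then 2 ^ ((n - 1) / 2) else 0) -
        (if Odd n then 0 else 1) + 1 - (-1) ^ ((n / 2) * n) := by
  have hno : ¬ Odd n := by simp [Nat.odd_iff, Nat.even_iff] at he ⊢; omega
  obtain ⟨a, ha⟩ := he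
  have ha2 : 2 ≤ a := by omega
  -- Step 1: rewrite Psi into explicit double sum
  have hgi : (n - 1) / 2 = a - 1 := by omega
  rw [hgi]
  have hstep1 : ∀ g ∈ Icc 1 (a - 1), Psi n g
      = ∑ j ∈ Icc 1 (min (a - g) g),
          Nat.choose (j + (a - g) - 1) (2 * j - 1) *
            Nat.choose (n - j - (a - g + 1)) (j + (a - g) - 1) := by
    intro g hg
    simp only [mem_Icc] at hg
    have hs : n + 1 - 2 * g = 2 * (a - g) + 1 := by omega
    have hodd : ¬ Even (2 * (a - g) + 1) := by
      simp [Nat.even_iff]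
    rw [Psi, Rz, RSz, hs, RScount, if_neg hodd,
      if_pos (show 2 ≤ 2 * (a - g) + 1 ∧ 2 * (a - g) + 1 ≤ n by omega),
      if_pos (show 2 ≤ 2 * (a - g) + 1 ∧ 2 * (a - g) + 1 ≤ n by omega)]
    rw [Rcount]
    rw [show (2 * (a - g) + 1) / 2 = a - g by omega,
      show (2 * (a - g) + 1 - 1) / 2 = a - g by omega,
      show (2 * (a - g) + 1 + 1) / 2 = a - g + 1 by omega,
      show n / 2 = a by omega, if_neg hodd,
      show a - (a - g) = g by omega]
    simp only [Nat.sub_zero, add_zero]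
  rw [Finset.sum_congr rfl hstep1]
  -- Step 2: reindex (g, j) -> (m, j) with m = j + a - g - 1
  have hstep2 : (∑ g ∈ Icc 1 (a - 1), ∑ j ∈ Icc 1 (min (a - g) g),
        Nat.choose (j + (a - g) - 1) (2 * j - 1) *
          Nat.choose (n - j - (a - g + 1)) (j + (a - g) - 1))
      = ∑ m ∈ Icc 1 (a - 1), ∑ j ∈ Icc 1 ((m + 1) / 2),
          Nat.choose m (2 * j - 1) * Nat.choose (n - 2 - m) m := by
    rw [Finset.sum_sigma', Finset.sum_sigma']
    apply Finset.sum_nbij' (fun x => (⟨x.2 + a - x.1 - 1, x.2⟩ : Σ _ : ℕ, ℕ))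
      (fun x => (⟨x.2 + a - 1 - x.1, x.2⟩ : Σ _ : ℕ, ℕ))
    · rintro ⟨g, j⟩ hx
      simp only [mem_sigma, mem_Icc, le_min_iff] at hx ⊢
      omega
    · rintro ⟨m, j⟩ hx
      simp only [mem_sigma, mem_Icc, le_min_iff] at hx ⊢
      omega
    · rintro ⟨g, j⟩ hx
      simp only [mem_sigma, mem_Icc, le_min_iff] at hx
      rw [Sigma.mk.inj_iff]
      exact ⟨show j + a - 1 - (j + a - g - 1) = g by omega, HEq.rfl⟩
    · rintro ⟨m, j⟩ hx
      simp only [mem_sigma, mem_Icc, le_min_iff] at hx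
      rw [Sigma.mk.inj_iff]
      exact ⟨show j + a - (j + a - 1 - m) - 1 = m by omega, HEq.rfl⟩
    · rintro ⟨g, j⟩ hx
      simp only [mem_sigma, mem_Icc, le_min_iff] at hx
      rw [show j + (a - g) - 1 = j + a - g - 1 by omega,
        show n - j - (a - g + 1) = n - 2 - (j + a - g - 1) by omega]
  rw [hstep2]
  -- Step 3: inner sums are powers of two
  have hstep3 : ∀ m ∈ Icc 1 (a - 1), ∑ j ∈ Icc 1 ((m + 1) / 2),
        Nat.choose m (2 * j - 1) * Nat.choose (n - 2 - m) m
      = 2 ^ (m - 1) * Nat.choose (n - 2 - m) m := by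
    intro m hm
    simp only [mem_Icc] at hm
    rw [← Finset.sum_mul, sum_choose_odd m (by omega)]
  rw [Finset.sum_congr rfl hstep3]
  -- Step 4: extend the range to Icc 1 (n - 2)
  have hstep4 : ∑ m ∈ Icc 1 (a - 1), 2 ^ (m - 1) * Nat.choose (n - 2 - m) m
      = ∑ m ∈ Icc 1 (n - 2), 2 ^ (m - 1) * Nat.choose (n - 2 - m) m := by
    apply Finset.sum_subset
    · apply Finset.Icc_subset_Icc_right; omega
    · intro m hm1 hm2
      simp only [mem_Icc] at hm1 hm2
      rw [Nat.choose_eq_zero_of_lt (by omega), mul_zero]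
  rw [hstep4]
  set S := ∑ m ∈ Icc 1 (n - 2), 2 ^ (m - 1) * Nat.choose (n - 2 - m) m with hS
  -- Step 5: relate to Lsum
  have hL : Lsum (n - 2) = 1 + 2 * S := by
    rw [Lsum, Finset.range_eq_Ico, Finset.sum_eq_sum_Ico_succ_bot (by omega)]
    congr 1
    · simp
    · rw [hS, Finset.mul_sum, show n - 2 + 1 = (n - 2) + 1 by omega, Finset.Ico_add_one_right_eq_Icc]
      apply Finset.sum_congr rfl
      intro m hm
      simp only [mem_Icc] at hm
      rw [show 2 ^ m = 2 * 2 ^ (m - 1) by rw [← pow_succ']; congr 1; omega]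
      ring
  -- final arithmetic
  rw [if_neg hno, if_neg hno]
  have hev : Even ((n / 2) * n) := (Even.mul_left ⟨a, ha⟩ _)
  rw [Even.neg_one_pow hev]
  have hval := Lsum_val (n - 2)
  rw [Even.neg_one_pow (by simp [Nat.even_iff]; omega : Even (n - 2))] at hval
  have hcast : (Lsum (n - 2) : ℤ) = 1 + 2 * S := by exact_mod_cast congrArg (Nat.cast : ℕ → ℤ) hL
  rw [hcast] at hval
  have h2n : (2 : ℤ) ^ (n - 1) = 2 * 2 ^ (n - 2) := by
    rw [← pow_succ']; congr 1; omega
  have h2n' : (2 : ℤ) ^ (n - 2 + 1) = 2 ^ (n - 1) := by congr 1; omega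
  rw [h2n', h2n] at hval
  linarith

private theorem odd_case (n : ℕ) (hn : 3 ≤ n) (ho : Odd n) :
    (3 * (∑ g ∈ Finset.Icc 1 ((n - 1) / 2), Psi n g) : ℤ) =
      2 ^ (n - 2) + (if Odd n then 2 ^ ((n - 1) / 2) else 0) -
        (if Odd n then 0 else 1) + 1 - (-1) ^ ((n / 2) * n) := by
  have hne : ¬ Even n := by rw [Nat.even_iff]; rw [Nat.odd_iff] at ho; omega
  obtain ⟨a, ha⟩ := ho
  have ha1 : 1 ≤ a := by omega
  rw [show (n - 1) / 2 = a by omega, show n / 2 = a by omega, if_pos ⟨a, ha⟩, if_pos ⟨a, ha⟩]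
  simp only [Psi]
  rw [Finset.sum_add_distrib]
  -- ===== R part =====
  have hR1 : ∀ g ∈ Icc 1 a, Rz n (n + 1 - 2 * g)
      = ∑ j ∈ Icc 1 (min (a + 1 - g) g),
          Nat.choose (j + (a - g) - 1) (2 * j - 1 - 1) *
            Nat.choose (n - j - (a + 1 - g)) (j + (a - g) - 1) := by
    intro g hg
    simp only [mem_Icc] at hg
    have hs : n + 1 - 2 * g = 2 * (a + 1 - g) := by omega
    have heven : Even (2 * (a + 1 - g)) := even_two_mul _
    rw [Rz, hs, if_pos (show 2 ≤ 2 * (a + 1 - g) ∧ 2 * (a + 1 - g) ≤ n by omega), Rcount]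
    rw [show (2 * (a + 1 - g)) / 2 = a + 1 - g by omega,
      show (2 * (a + 1 - g) - 1) / 2 = a - g by omega,
      show (2 * (a + 1 - g) + 1) / 2 = a + 1 - g by omega,
      show n / 2 = a by omega, if_pos heven,
      show a - (a - g) = g by omega]
  rw [Finset.sum_congr rfl hR1]
  -- reindex R part
  have hR2 : (∑ g ∈ Icc 1 a, ∑ j ∈ Icc 1 (min (a + 1 - g) g),
        Nat.choose (j + (a - g) - 1) (2 * j - 1 - 1) *
          Nat.choose (n - j - (a + 1 - g)) (j + (a - g) - 1))
      = ∑ m ∈ Icc 0 (a - 1), ∑ j ∈ Icc 1 (m / 2 + 1),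
          Nat.choose m (2 * j - 2) * Nat.choose (n - 2 - m) m := by
    rw [Finset.sum_sigma', Finset.sum_sigma']
    apply Finset.sum_nbij' (fun x => (⟨x.2 + a - x.1 - 1, x.2⟩ : Σ _ : ℕ, ℕ))
      (fun x => (⟨x.2 + a - 1 - x.1, x.2⟩ : Σ _ : ℕ, ℕ))
    · rintro ⟨g, j⟩ hx
      simp only [mem_sigma, mem_Icc, le_min_iff] at hx ⊢
      omega
    · rintro ⟨m, j⟩ hx
      simp only [mem_sigma, mem_Icc, le_min_iff] at hx ⊢
      omega
    · rintro ⟨g, j⟩ hx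
      simp only [mem_sigma, mem_Icc, le_min_iff] at hx
      rw [Sigma.mk.inj_iff]
      exact ⟨show j + a - 1 - (j + a - g - 1) = g by omega, HEq.rfl⟩
    · rintro ⟨m, j⟩ hx
      simp only [mem_sigma, mem_Icc, le_min_iff] at hx
      rw [Sigma.mk.inj_iff]
      exact ⟨show j + a - (j + a - 1 - m) - 1 = m by omega, HEq.rfl⟩
    · rintro ⟨g, j⟩ hx
      simp only [mem_sigma, mem_Icc, le_min_iff] at hx
      rw [show j + (a - g) - 1 = j + a - g - 1 by omega,
        show 2 * j - 1 - 1 = 2 * j - 2 by omega,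
        show n - j - (a + 1 - g) = n - 2 - (j + a - g - 1) by omega]
  rw [hR2]
  -- split off m = 0 and evaluate inner sums
  have hR3 : ∑ m ∈ Icc 0 (a - 1), ∑ j ∈ Icc 1 (m / 2 + 1),
        Nat.choose m (2 * j - 2) * Nat.choose (n - 2 - m) m
      = 1 + ∑ m ∈ Icc 1 (a - 1), 2 ^ (m - 1) * Nat.choose (n - 2 - m) m := by
    rw [show Icc 0 (a - 1) = Ico 0 a by rw [← Finset.Ico_add_one_right_eq_Icc]; congr 1; omega,
      Finset.sum_eq_sum_Ico_succ_bot (by omega)]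
    congr 1
    · simp
    · rw [show Ico 1 a = Icc 1 (a - 1) by rw [← Finset.Ico_add_one_right_eq_Icc]; congr 1; omega]
      apply Finset.sum_congr rfl
      intro m hm
      simp only [mem_Icc] at hm
      rw [← Finset.sum_mul, sum_choose_even m (by omega)]
  rw [hR3]
  -- extend range
  have hR4 : ∑ m ∈ Icc 1 (a - 1), 2 ^ (m - 1) * Nat.choose (n - 2 - m) m
      = ∑ m ∈ Icc 1 (n - 2), 2 ^ (m - 1) * Nat.choose (n - 2 - m) m := by
    apply Finset.sum_subset
    · apply Finset.Icc_subset_Icc_right; omega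
    · intro m hm1 hm2
      simp only [mem_Icc] at hm1 hm2
      rw [Nat.choose_eq_zero_of_lt (by omega), mul_zero]
  rw [hR4]
  set S := ∑ m ∈ Icc 1 (n - 2), 2 ^ (m - 1) * Nat.choose (n - 2 - m) m with hSdef
  -- ===== RS part =====
  have hRS1 : ∀ g ∈ Icc 1 a, RSz n (n + 1 - 2 * g)
      = ∑ j ∈ Icc 1 (min (a + 1 - g) g),
          (if Even (j + (a + 1 - g)) then
            Nat.choose ((j + (a + 1 - g)) / 2 - 1) (j - 1) *
              Nat.choose (a - (j + (a + 1 - g) + 1) / 2) ((j + (a + 1 - g)) / 2 - 1)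
          else 0) := by
    intro g hg
    simp only [mem_Icc] at hg
    have hs : n + 1 - 2 * g = 2 * (a + 1 - g) := by omega
    have heven : Even (2 * (a + 1 - g)) := even_two_mul _
    rw [RSz, hs, if_pos (show 2 ≤ 2 * (a + 1 - g) ∧ 2 * (a + 1 - g) ≤ n by omega),
      RScount, if_pos heven,
      show (2 * (a + 1 - g)) / 2 = a + 1 - g by omega,
      show n / 2 = a by omega,
      show a + 1 - (a + 1 - g) = g by omega]
    apply Finset.sum_congr rfl
    intro j hj
    have hiff : Even ((j + (a + 1 - g)) * n) ↔ Even (j + (a + 1 - g)) := by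
      rw [Nat.even_mul]
      constructor
      · rintro (h | h)
        · exact h
        · exact absurd h hne
      · exact Or.inl
    rw [if_congr hiff rfl rfl, ite_mul, one_mul, zero_mul]
  rw [Finset.sum_congr rfl hRS1]
  -- reindex RS part
  have hRS2 : (∑ g ∈ Icc 1 a, ∑ j ∈ Icc 1 (min (a + 1 - g) g),
        (if Even (j + (a + 1 - g)) then
          Nat.choose ((j + (a + 1 - g)) / 2 - 1) (j - 1) *
            Nat.choose (a - (j + (a + 1 - g) + 1) / 2) ((j + (a + 1 - g)) / 2 - 1)
        else 0))
      = ∑ p ∈ Icc 1 ((a + 1) / 2), ∑ j ∈ Icc 1 p,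
          Nat.choose (p - 1) (j - 1) * Nat.choose (a - p) (p - 1) := by
    rw [Finset.sum_sigma', Finset.sum_sigma', ← Finset.sum_filter]
    apply Finset.sum_nbij' (fun x => (⟨(x.2 + (a + 1 - x.1)) / 2, x.2⟩ : Σ _ : ℕ, ℕ))
      (fun x => (⟨a + 1 + x.2 - 2 * x.1, x.2⟩ : Σ _ : ℕ, ℕ))
    · rintro ⟨g, j⟩ hx
      simp only [mem_filter, mem_sigma, mem_Icc, le_min_iff, Nat.even_iff] at hx ⊢
      omega
    · rintro ⟨p, j⟩ hx
      simp only [mem_filter, mem_sigma, mem_Icc, le_min_iff, Nat.even_iff] at hx ⊢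
      omega
    · rintro ⟨g, j⟩ hx
      simp only [mem_filter, mem_sigma, mem_Icc, le_min_iff, Nat.even_iff] at hx
      rw [Sigma.mk.inj_iff]
      exact ⟨show a + 1 + j - 2 * ((j + (a + 1 - g)) / 2) = g by omega, HEq.rfl⟩
    · rintro ⟨p, j⟩ hx
      simp only [mem_filter, mem_sigma, mem_Icc, le_min_iff, Nat.even_iff] at hx
      rw [Sigma.mk.inj_iff]
      exact ⟨show (j + (a + 1 - (a + 1 + j - 2 * p))) / 2 = p by omega, HEq.rfl⟩
    · rintro ⟨g, j⟩ hx
      simp only [mem_filter, mem_sigma, mem_Icc, le_min_iff, Nat.even_iff] at hx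
      rw [show (j + (a + 1 - g) + 1) / 2 = (j + (a + 1 - g)) / 2 by omega]
  rw [hRS2]
  -- evaluate inner row sums
  have hRS3 : ∀ p ∈ Icc 1 ((a + 1) / 2), ∑ j ∈ Icc 1 p,
        Nat.choose (p - 1) (j - 1) * Nat.choose (a - p) (p - 1)
      = 2 ^ (p - 1) * Nat.choose (a - p) (p - 1) := by
    intro p hp
    simp only [mem_Icc] at hp
    rw [← Finset.sum_mul, sum_choose_row p (by omega)]
  rw [Finset.sum_congr rfl hRS3]
  -- extend range
  have hRS4 : ∑ p ∈ Icc 1 ((a + 1) / 2), 2 ^ (p - 1) * Nat.choose (a - p) (p - 1)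
      = ∑ p ∈ Icc 1 a, 2 ^ (p - 1) * Nat.choose (a - p) (p - 1) := by
    apply Finset.sum_subset
    · apply Finset.Icc_subset_Icc_right; omega
    · intro p hp1 hp2
      simp only [mem_Icc] at hp1 hp2
      rw [Nat.choose_eq_zero_of_lt (by omega), mul_zero]
  rw [hRS4]
  -- identify with Lsum (a - 1)
  have hRS5 : ∑ p ∈ Icc 1 a, 2 ^ (p - 1) * Nat.choose (a - p) (p - 1) = Lsum (a - 1) := by
    rw [Lsum, show a - 1 + 1 = a by omega]
    apply Finset.sum_nbij' (fun p => p - 1) (fun q => q + 1)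
    · intro p hp; simp only [mem_Icc] at hp; simp only [mem_range]; omega
    · intro q hq; simp only [mem_range] at hq; simp only [mem_Icc]; omega
    · intro p hp; simp only [mem_Icc] at hp; omega
    · intro q hq; simp only [mem_range] at hq; omega
    · intro p hp
      simp only [mem_Icc] at hp
      rw [show a - 1 - (p - 1) = a - p by omega, mul_comm]
  rw [hRS5]
  -- ===== Lsum relation for S =====
  have hL : Lsum (n - 2) = 1 + 2 * S := by
    rw [Lsum, Finset.range_eq_Ico, Finset.sum_eq_sum_Ico_succ_bot (by omega)]
    congr 1
    · simp
    · rw [hSdef, Finset.mul_sum, show n - 2 + 1 = (n - 2) + 1 by omega, Finset.Ico_add_one_right_eq_Icc]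
      apply Finset.sum_congr rfl
      intro m hm
      simp only [mem_Icc] at hm
      rw [show 2 ^ m = 2 * 2 ^ (m - 1) by rw [← pow_succ']; congr 1; omega]
      ring
  -- ===== final arithmetic =====
  have hval1 := Lsum_val (n - 2)
  rw [Odd.neg_one_pow (by rw [Nat.odd_iff]; omega : Odd (n - 2))] at hval1
  have hcast1 : (Lsum (n - 2) : ℤ) = 1 + 2 * S := by exact_mod_cast congrArg (Nat.cast : ℕ → ℤ) hL
  rw [hcast1, show n - 2 + 1 = n - 1 by omega,
    show (2 : ℤ) ^ (n - 1) = 2 * 2 ^ (n - 2) by rw [← pow_succ']; congr 1; omega] at hval1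
  have hval2 := Lsum_val (a - 1)
  rw [show a - 1 + 1 = a by omega] at hval2
  push_cast
  rcases Nat.even_or_odd a with haev | haod
  · rw [Even.neg_one_pow (Even.mul_right haev n)]
    rw [Odd.neg_one_pow (by rw [Nat.odd_iff]; rw [Nat.even_iff] at haev; omega : Odd (a - 1))] at hval2
    linarith
  · rw [Odd.neg_one_pow (Odd.mul haod ⟨a, ha⟩)]
    rw [Even.neg_one_pow (by rw [Nat.even_iff]; rw [Nat.odd_iff] at haod; omega : Even (a - 1))] at hval2
    linarith


/-- For every `n ≥ 3`, `Σ_{g=1}^{⌊(n-1)/2⌋} Ψ(n,g) = RK(n)`, where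
`RK(n) = (1/3)(2^{n-2} + ε_odd(n)·2^{(n-1)/2} - (1-ε_odd(n)) + 1 - (-1)^{⌊n/2⌋n})`
and `ε_odd(n) = 1` if `n` is odd, `0` otherwise. Stated multiplied by `3`. -/
theorem sum_Psi_eq_RK (n : ℕ) (hn : 3 ≤ n) :
    (3 * (∑ g ∈ Finset.Icc 1 ((n - 1) / 2), Psi n g) : ℤ) =
      2 ^ (n - 2) + (if Odd n then 2 ^ ((n - 1) / 2) else 0) -
        (if Odd n then 0 else 1) + 1 - (-1) ^ ((n / 2) * n) := by
  rcases Nat.even_or_odd n with he | ho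
  · exact even_case n hn he
  · exact odd_case n hn ho
end

section
/- Define the number of oriented rational links (two components) of crossing number n and genus g by Φ(n,g) = R(n, n-2g) + RS(n, n-2g). Then for every n ≥ 2, Σ_{g=0}^{⌊n/2⌋} Φ(n,g) = RL(n), where RL(n) = (1/3)(2^{n-2} + 2(-1)^n) + ε_even(n)·2^{(n-2)/2} and ε_even(n) = 1 if n is even, 0 otherwise. -/
open Finset

/-- `Φ(n,g) = R(n, n-2g) + RS(n, n-2g)`, the number of two-component oriented
rational links with crossing number `n` and genus `g`. -/
def Phi (n g : ℕ) : ℕ := Rz n (n - 2 * g) + RSz n (n - 2 * g)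

def Se (N : ℕ) : ℕ := ∑ t ∈ range (N+1), N.choose (2*t)
def So (N : ℕ) : ℕ := ∑ t ∈ range (N+1), N.choose (2*t+1)
def Jf (N : ℕ) : ℕ := ∑ k ∈ range (N+1), (N - k).choose k * 2^k

lemma sum_pair {M : Type*} [AddCommMonoid M] (f : ℕ → M) (n : ℕ) :
    ∑ i ∈ range (2*n), f i = ∑ p ∈ range n, (f (2*p) + f (2*p+1)) := by
  induction n with
  | zero => simp
  | succ n ih =>
      have h2 : 2 * (n+1) = (2*n + 1) + 1 := by ring
      rw [h2, sum_range_succ, sum_range_succ, ih, sum_range_succ, add_assoc]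

lemma choose_sum_all (N M : ℕ) (h : N < M) : ∑ t ∈ range M, N.choose t = 2^N := by
  rw [← Nat.sum_range_choose N]
  symm
  apply Finset.sum_subset
  · intro x hx
    simp only [mem_range] at *
    omega
  · intro x hx hx'
    simp only [mem_range] at *
    exact Nat.choose_eq_zero_of_lt (by omega)


lemma Se_add_So (N : ℕ) : Se N + So N = 2^N := by
  rw [Se, So, ← Finset.sum_add_distrib, ← sum_pair (fun i => N.choose i) (N+1)]
  exact choose_sum_all N (2*(N+1)) (by omega)

lemma Se_eq_So (N : ℕ) (h : 1 ≤ N) : Se N = So N := by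
  have hA : ∑ i ∈ range (N+1), (-1 : ℤ)^i * N.choose i = 0 :=
    Int.alternating_sum_range_choose_of_ne (by omega)
  have hA2 : ∑ i ∈ range (2*(N+1)), (-1 : ℤ)^i * N.choose i = 0 := by
    rw [← hA]
    symm
    apply Finset.sum_subset
    · intro x hx; simp only [mem_range] at *; omega
    · intro x hx hx'
      simp only [mem_range] at *
      rw [Nat.choose_eq_zero_of_lt (by omega)]
      simp
  rw [sum_pair (fun i => (-1 : ℤ)^i * N.choose i) (N+1)] at hA2
  have : ∑ p ∈ range (N+1), ((-1:ℤ)^(2*p) * N.choose (2*p) + (-1:ℤ)^(2*p+1) * N.choose (2*p+1))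
      = (Se N : ℤ) - So N := by
    rw [Se, So]
    push_cast
    rw [← Finset.sum_sub_distrib]
    apply Finset.sum_congr rfl
    intro p _
    have h1 : (-1:ℤ)^(2*p) = 1 := Even.neg_one_pow ⟨p, by ring⟩
    have h2 : (-1:ℤ)^(2*p+1) = -1 := Odd.neg_one_pow ⟨p, by ring⟩
    rw [h1, h2]; ring
  rw [this] at hA2
  have := sub_eq_zero.mp hA2
  exact_mod_cast this

lemma two_Se (N : ℕ) (h : 1 ≤ N) : 2 * Se N = 2^N := by
  have := Se_add_So N
  rw [← Se_eq_So N h] at this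
  omega

lemma two_So (N : ℕ) (h : 1 ≤ N) : 2 * So N = 2^N := by
  have := Se_add_So N
  rw [Se_eq_So N h] at this
  omega


lemma Jf_rec (N : ℕ) : Jf (N+2) = Jf (N+1) + 2 * Jf N := by
  have e1 : Jf (N+2) = (∑ k ∈ range (N+2), (N+1-k).choose (k+1) * 2^(k+1)) + 1 := by
    rw [Jf, sum_range_succ']
    congr 1
    · apply Finset.sum_congr rfl
      intro k hk
      have h : N+2-(k+1) = N+1-k := by omega
      rw [h]
  rw [sum_range_succ] at e1
  have hz : (N+1-(N+1)).choose (N+2) * 2^(N+2) = 0 := by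
    simp [Nat.choose_eq_zero_of_lt]
  rw [hz, add_zero] at e1
  have e2 : ∀ k ∈ range (N+1), (N+1-k).choose (k+1) * 2^(k+1)
      = (N-k).choose k * 2^(k+1) + (N-k).choose (k+1) * 2^(k+1) := by
    intro k hk
    simp only [mem_range] at hk
    have : N + 1 - k = (N - k) + 1 := by omega
    rw [this, Nat.choose_succ_succ', add_mul]
  rw [Finset.sum_congr rfl e2, Finset.sum_add_distrib] at e1
  have e3 : ∑ k ∈ range (N+1), (N-k).choose k * 2^(k+1) = 2 * Jf N := by
    rw [Jf, Finset.mul_sum]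
    apply Finset.sum_congr rfl
    intro k _
    ring
  have e4 : Jf (N+1) = (∑ k ∈ range (N+1), (N-k).choose (k+1) * 2^(k+1)) + 1 := by
    rw [Jf, sum_range_succ']
    congr 1
    · apply Finset.sum_congr rfl
      intro k hk
      simp only [mem_range] at hk
      have h : N+1-(k+1) = N-k := by omega
      rw [h]
  rw [e3] at e1
  omega

lemma Jf_val (N : ℕ) : (3 * Jf N : ℤ) = 2^(N+1) + (-1)^N := by
  induction N using Nat.twoStepInduction with
  | zero => simp [Jf]
  | one => norm_num [Jf, Finset.sum_range_succ]
  | more n ih1 ih2 =>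
      rw [Jf_rec]
      push_cast
      linear_combination ih2 + 2*ih1

lemma Jf_trim (X M : ℕ) (h1 : X + 1 ≤ 2*M) (h2 : M ≤ X+1) :
    ∑ k ∈ range M, (X-k).choose k * 2^k = Jf X := by
  rw [Jf]
  apply Finset.sum_subset
  · intro x hx; simp only [mem_range] at *; omega
  · intro x hx hx'
    simp only [mem_range] at *
    rw [Nat.choose_eq_zero_of_lt (by omega)]
    simp

lemma convSum (m : ℕ) (f : ℕ → ℕ → ℕ) (hf : ∀ i j, m + 1 < i → f i j = 0) :
    ∑ k ∈ Icc 1 m, ∑ j ∈ Icc 1 m, f (j + k) j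
      = ∑ i ∈ Icc 2 (m+1), ∑ j ∈ Icc 1 (i-1), f i j := by
  rw [← Finset.sum_product']
  rw [Finset.sum_sigma']
  rw [← Finset.sum_filter_of_ne (p := fun p : ℕ × ℕ => p.2 + p.1 ≤ m + 1)
    (by
      intro x hx hne
      by_contra hc
      exact hne (hf _ _ (by omega)))]
  apply Finset.sum_nbij' (i := fun p : ℕ × ℕ => (⟨p.2 + p.1, p.2⟩ : Σ _ : ℕ, ℕ))
    (j := fun q : Σ _ : ℕ, ℕ => (q.1 - q.2, q.2))
  · intro a ha
    simp only [mem_filter, mem_product, mem_Icc, mem_sigma] at *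
    omega
  · intro a ha
    simp only [mem_filter, mem_product, mem_Icc, mem_sigma] at *
    omega
  · intro a ha
    obtain ⟨x, y⟩ := a
    simp only [mem_filter, mem_product, mem_Icc] at ha
    simp only [Prod.mk.injEq]
    exact ⟨by omega, trivial⟩
  · intro a ha
    simp only [mem_sigma, mem_Icc] at ha
    have h : a.2 + (a.1 - a.2) = a.1 := by omega
    exact Sigma.ext (by simp [h]) (by simp)
  · intro a ha
    rfl

lemma Rcount_even (m k : ℕ) (hk : 1 ≤ k) :
    Rcount (2*m) (2*k) =
      ∑ j ∈ Icc 1 m, (j+k-2).choose (2*j-2) * (2*m-(j+k)).choose (j+k-2) := by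
  have h1 : Even (2*k) := ⟨k, by ring⟩
  have d1 : (2*k)/2 = k := by omega
  have d2 : (2*k-1)/2 = k-1 := by omega
  have d3 : (2*k+1)/2 = k := by omega
  have d4 : (2*m)/2 = m := by omega
  rw [Rcount, if_pos h1, d1, d2, d3, d4]
  have step1 : ∑ j ∈ Icc 1 (min k (m - (k-1))),
      (j + (k-1) - 1).choose (2*j - 1 - 1) * (2*m - j - k).choose (j + (k-1) - 1)
      = ∑ j ∈ Icc 1 (min k (m - (k-1))),
      (j+k-2).choose (2*j-2) * (2*m-(j+k)).choose (j+k-2) := by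
    apply Finset.sum_congr rfl
    intro j hj
    simp only [mem_Icc] at hj
    have e1 : j + (k-1) - 1 = j+k-2 := by omega
    have e2 : 2*j - 1 - 1 = 2*j-2 := by omega
    have e3 : 2*m - j - k = 2*m-(j+k) := by omega
    rw [e1, e2, e3]
  rw [step1]
  apply Finset.sum_subset
  · intro x hx
    simp only [mem_Icc] at *
    omega
  · intro j hj hj'
    simp only [mem_Icc, not_and, not_le] at hj hj'
    have hmin : min k (m - (k-1)) < j := hj' hj.1
    rcases le_or_gt j k with h | h
    · have hlt : m - (k-1) < j := by omega
      have hz : (2*m-(j+k)).choose (j+k-2) = 0 := Nat.choose_eq_zero_of_lt (by omega)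
      rw [hz, mul_zero]
    · have hz : (j+k-2).choose (2*j-2) = 0 := Nat.choose_eq_zero_of_lt (by omega)
      rw [hz, zero_mul]

lemma RScount_even (m k : ℕ) (hk : 1 ≤ k) (hm : 2 ≤ m) :
    RScount (2*m) (2*k) =
      ∑ j ∈ Icc 1 m, ((j+k)/2 - 1).choose (j-1) * (m - (j+k+1)/2).choose ((j+k)/2 - 1) := by
  have h1 : Even (2*k) := ⟨k, by ring⟩
  have d1 : (2*k)/2 = k := by omega
  have d4 : (2*m)/2 = m := by omega
  rw [RScount, if_pos h1, d1, d4]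
  have step1 : ∑ j ∈ Icc 1 (min k (m + 1 - k)),
      (if Even ((j + k) * (2*m)) then 1 else 0) *
        (((j+k)/2 - 1).choose (j-1) * (m - (j+k+1)/2).choose ((j+k)/2 - 1))
      = ∑ j ∈ Icc 1 (min k (m + 1 - k)),
      ((j+k)/2 - 1).choose (j-1) * (m - (j+k+1)/2).choose ((j+k)/2 - 1) := by
    apply Finset.sum_congr rfl
    intro j _
    rw [if_pos ((even_two_mul m).mul_left (j+k)), one_mul]
  rw [step1]
  apply Finset.sum_subset
  · intro x hx
    simp only [mem_Icc] at *
    omega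
  · intro j hj hj'
    simp only [mem_Icc, not_and, not_le] at hj hj'
    have hmin : min k (m + 1 - k) < j := hj' hj.1
    rcases le_or_gt j k with h | h
    · have hlt : m + 1 - k < j := by omega
      have hz : (m - (j+k+1)/2).choose ((j+k)/2 - 1) = 0 := Nat.choose_eq_zero_of_lt (by omega)
      rw [hz, mul_zero]
    · have hz : ((j+k)/2 - 1).choose (j-1) = 0 := Nat.choose_eq_zero_of_lt (by omega)
      rw [hz, zero_mul]

lemma Rcount_odd (m k : ℕ) (hk : 1 ≤ k) :
    Rcount (2*m+1) (2*k+1) =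
      ∑ j ∈ Icc 1 m, (j+k-1).choose (2*j-1) * (2*m-(j+k)).choose (j+k-1) := by
  have h1 : ¬ Even (2*k+1) := by simp [Nat.even_add_one, parity_simps]
  have d1 : (2*k+1)/2 = k := by omega
  have d2 : (2*k+1-1)/2 = k := by omega
  have d3 : (2*k+1+1)/2 = k+1 := by omega
  have d4 : (2*m+1)/2 = m := by omega
  rw [Rcount, if_neg h1, d1, d2, d3, d4]
  have step1 : ∑ j ∈ Icc 1 (min k (m - k)),
      (j + k - 1).choose (2*j - 0 - 1) * (2*m+1 - j - (k+1)).choose (j + k - 1)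
      = ∑ j ∈ Icc 1 (min k (m - k)),
      (j+k-1).choose (2*j-1) * (2*m-(j+k)).choose (j+k-1) := by
    apply Finset.sum_congr rfl
    intro j hj
    have e2 : 2*j - 0 - 1 = 2*j-1 := by omega
    have e3 : 2*m+1 - j - (k+1) = 2*m-(j+k) := by omega
    rw [e2, e3]
  rw [step1]
  apply Finset.sum_subset
  · intro x hx
    simp only [mem_Icc] at *
    omega
  · intro j hj hj'
    simp only [mem_Icc, not_and, not_le] at hj hj'
    have hmin : min k (m - k) < j := hj' hj.1
    rcases le_or_gt j k with h | h
    · have hlt : m - k < j := by omega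
      have hz : (2*m-(j+k)).choose (j+k-1) = 0 := Nat.choose_eq_zero_of_lt (by omega)
      rw [hz, mul_zero]
    · have hz : (j+k-1).choose (2*j-1) = 0 := Nat.choose_eq_zero_of_lt (by omega)
      rw [hz, zero_mul]

lemma Icc_sum_shift (a b : ℕ) (f : ℕ → ℕ) :
    ∑ i ∈ Icc a b, f i = ∑ t ∈ range (b+1-a), f (a+t) := by
  rw [← Finset.Ico_add_one_right_eq_Icc, Finset.sum_Ico_eq_sum_range]

lemma innerA (m i : ℕ) (hi : 2 ≤ i) (c : ℕ) :
    ∑ j ∈ Icc 1 (i-1), (i-2).choose (2*j-2) * c = Se (i-2) * c := by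
  rw [← Finset.sum_mul]
  congr 1
  rw [Icc_sum_shift]
  have h1 : i-1+1-1 = (i-2)+1 := by omega
  rw [h1, Se]
  apply Finset.sum_congr rfl
  intro t _
  congr 1
  omega

lemma innerO (m i : ℕ) (hi : 2 ≤ i) (c : ℕ) :
    ∑ j ∈ Icc 1 (i-1), (i-1).choose (2*j-1) * c = So (i-1) * c := by
  rw [← Finset.sum_mul]
  congr 1
  rw [Icc_sum_shift]
  have h1 : i-1+1-1 = i-1 := by omega
  rw [h1, So, sum_range_succ]
  have hz : (i-1).choose (2*(i-1)+1) = 0 := Nat.choose_eq_zero_of_lt (by omega)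
  rw [hz, add_zero]
  apply Finset.sum_congr rfl
  intro t _
  congr 1
  omega

lemma innerB (i : ℕ) (hi : 2 ≤ i) (c : ℕ) :
    ∑ j ∈ Icc 1 (i-1), (i/2-1).choose (j-1) * c = 2^(i/2-1) * c := by
  rw [← Finset.sum_mul]
  congr 1
  rw [Icc_sum_shift]
  have h1 : i-1+1-1 = i-1 := by omega
  rw [h1]
  rw [show ∑ t ∈ range (i-1), (i/2-1).choose (1+t-1) = ∑ t ∈ range (i-1), (i/2-1).choose t from
    Finset.sum_congr rfl (fun t _ => by congr 1; omega)]
  exact choose_sum_all _ _ (by omega)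

lemma SA_even (m : ℕ) (hm : 1 ≤ m) :
    2 * ∑ i ∈ Icc 2 (m+1), Se (i-2) * (2*m-i).choose (i-2) = Jf (2*m-2) + 1 := by
  obtain ⟨M, rfl⟩ : ∃ M, m = M + 1 := ⟨m-1, by omega⟩
  rw [Finset.mul_sum, Icc_sum_shift]
  have h1 : (M+1)+1+1-2 = M+1 := by omega
  rw [h1]
  have h2 : ∀ t ∈ range (M+1), 2 * (Se (2+t-2) * (2*(M+1)-(2+t)).choose (2+t-2))
      = 2 * Se t * (2*M-t).choose t := by
    intro t _
    have e1 : 2+t-2 = t := by omega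
    have e2 : 2*(M+1)-(2+t) = 2*M-t := by omega
    rw [e1, e2, mul_assoc]
  rw [Finset.sum_congr rfl h2, sum_range_succ']
  have h3 : ∀ t ∈ range M, 2 * Se (t+1) * (2*M-(t+1)).choose (t+1)
      = (2*M-(t+1)).choose (t+1) * 2^(t+1) := by
    intro t _
    rw [two_Se (t+1) (by omega), mul_comm]
  rw [Finset.sum_congr rfl h3]
  have h4 : 2 * Se 0 * (2*M-0).choose 0 = 2 := by simp [Se]
  rw [h4]
  have h5 : Jf (2*(M+1)-2) = ∑ k ∈ range (M+1), (2*M-k).choose k * 2^k := by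
    have e : 2*(M+1)-2 = 2*M := by omega
    rw [e, ← Jf_trim (2*M) (M+1) (by omega) (by omega)]
  rw [h5, sum_range_succ']
  simp

lemma SA_odd (m : ℕ) (hm : 1 ≤ m) :
    2 * (∑ i ∈ Icc 2 (m+1), So (i-1) * (2*m-i).choose (i-1)) + 1 = Jf (2*m-1) := by
  rw [Finset.mul_sum, Icc_sum_shift]
  have h1 : m+1+1-2 = m := by omega
  rw [h1]
  have h2 : ∀ t ∈ range m, 2 * (So (2+t-1) * (2*m-(2+t)).choose (2+t-1))
      = (2*m-1-(t+1)).choose (t+1) * 2^(t+1) := by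
    intro t _
    have e1 : 2+t-1 = t+1 := by omega
    have e2 : 2*m-(2+t) = 2*m-1-(t+1) := by omega
    rw [e1, e2, ← mul_assoc, two_So (t+1) (by omega), mul_comm]
  rw [Finset.sum_congr rfl h2]
  have h5 : Jf (2*m-1) = ∑ k ∈ range (m+1), (2*m-1-k).choose k * 2^k :=
    (Jf_trim (2*m-1) (m+1) (by omega) (by omega)).symm
  rw [h5, sum_range_succ']
  simp

lemma SB_eval (m : ℕ) (hm : 2 ≤ m) :
    ∑ i ∈ Icc 2 (m+1), 2^(i/2-1) * (m - (i+1)/2).choose (i/2-1) = Jf (m-1) + Jf (m-2) := by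
  rw [Icc_sum_shift]
  have h1 : m+1+1-2 = m := by omega
  rw [h1]
  have key : ∀ M, M ≥ 1 → ∑ t ∈ range (2*M), 2^((2+t)/2-1) * (m - (2+t+1)/2).choose ((2+t)/2-1)
      = (∑ p ∈ range M, (m-1-p).choose p * 2^p) + ∑ p ∈ range M, (m-2-p).choose p * 2^p := by
    intro M _
    rw [sum_pair (fun t => 2^((2+t)/2-1) * (m - (2+t+1)/2).choose ((2+t)/2-1)) M,
      Finset.sum_add_distrib]
    congr 1
    · apply Finset.sum_congr rfl
      intro p _
      have e1 : (2+2*p)/2-1 = p := by omega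
      have e2 : (2+2*p+1)/2 = p+1 := by omega
      rw [e1, e2, mul_comm]
      congr 2
      omega
    · apply Finset.sum_congr rfl
      intro p _
      have e1 : (2+(2*p+1))/2-1 = p := by omega
      have e2 : (2+(2*p+1)+1)/2 = p+2 := by omega
      rw [e1, e2, mul_comm]
      congr 2
      omega
  rcases Nat.even_or_odd m with he | ho
  · obtain ⟨M, hM⟩ := he
    have hM' : m = 2*M := by omega
    subst hM'
    rw [key M (by omega), Jf_trim (2*M-1) M (by omega) (by omega),
      Jf_trim (2*M-2) M (by omega) (by omega)]
  · obtain ⟨M, hM⟩ := ho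
    subst hM
    have hM1 : 1 ≤ M := by omega
    have hext : ∑ t ∈ range (2*M+1), 2^((2+t)/2-1) * (2*M+1 - (2+t+1)/2).choose ((2+t)/2-1)
        = ∑ t ∈ range (2*(M+1)), 2^((2+t)/2-1) * (2*M+1 - (2+t+1)/2).choose ((2+t)/2-1) := by
      have e : 2*(M+1) = (2*M+1)+1 := by ring
      rw [e]
      symm
      rw [sum_range_succ]
      have hz : (2*M+1 - (2+(2*M+1)+1)/2).choose ((2+(2*M+1))/2-1) = 0 := by
        apply Nat.choose_eq_zero_of_lt
        omega
      rw [hz, mul_zero, add_zero]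
    rw [hext, key (M+1) (by omega), Jf_trim (2*M+1-1) (M+1) (by omega) (by omega),
      Jf_trim (2*M+1-2) (M+1) (by omega) (by omega)]

lemma Icc_zero_eq_range (m : ℕ) : Icc 0 m = range (m+1) := by
  ext x; simp [Nat.lt_succ_iff]

lemma even_sum (m : ℕ) (hm : 2 ≤ m) :
    ∑ g ∈ Icc 0 m, Phi (2*m) g
      = (∑ i ∈ Icc 2 (m+1), Se (i-2) * (2*m-i).choose (i-2))
        + ∑ i ∈ Icc 2 (m+1), 2^(i/2-1) * (m - (i+1)/2).choose (i/2-1) := by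
  rw [Icc_zero_eq_range, ← Finset.sum_range_reflect]
  have h3 : ∀ k ∈ range (m+1), Phi (2*m) (m+1-1-k) = Rz (2*m) (2*k) + RSz (2*m) (2*k) := by
    intro k hk
    simp only [mem_range] at hk
    have e : 2*m - 2*(m+1-1-k) = 2*k := by omega
    rw [Phi, e]
  rw [Finset.sum_congr rfl h3, sum_range_succ']
  have h4 : Rz (2*m) (2*0) + RSz (2*m) (2*0) = 0 := by
    norm_num [Rz, RSz]
  rw [h4, add_zero]
  have h5 : ∀ k ∈ range m, Rz (2*m) (2*(k+1)) + RSz (2*m) (2*(k+1))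
      = (∑ j ∈ Icc 1 m, (j+(k+1)-2).choose (2*j-2) * (2*m-(j+(k+1))).choose (j+(k+1)-2))
        + ∑ j ∈ Icc 1 m, ((j+(k+1))/2 - 1).choose (j-1) * (m - (j+(k+1)+1)/2).choose ((j+(k+1))/2 - 1) := by
    intro k hk
    simp only [mem_range] at hk
    rw [Rz, if_pos (by omega), RSz, if_pos (by omega),
      Rcount_even m (k+1) (by omega), RScount_even m (k+1) (by omega) hm]
  rw [Finset.sum_congr rfl h5, Finset.sum_add_distrib]
  have hshift : ∀ F : ℕ → ℕ, ∑ k ∈ Icc 1 m, F k = ∑ k ∈ range m, F (k+1) := by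
    intro F
    rw [Icc_sum_shift]
    have e : m+1-1 = m := by omega
    rw [e]
    exact Finset.sum_congr rfl (fun t _ => by rw [add_comm])
  congr 1
  · rw [← hshift (fun k => ∑ j ∈ Icc 1 m, (j+k-2).choose (2*j-2) * (2*m-(j+k)).choose (j+k-2))]
    rw [convSum m (fun i j => (i-2).choose (2*j-2) * (2*m-i).choose (i-2))
      (by
        intro i j hi
        have hz : (2*m-i).choose (i-2) = 0 := Nat.choose_eq_zero_of_lt (by omega)
        simp only [hz, mul_zero])]
    apply Finset.sum_congr rfl
    intro i hi
    simp only [mem_Icc] at hi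
    exact innerA m i hi.1 _
  · rw [← hshift (fun k => ∑ j ∈ Icc 1 m, ((j+k)/2 - 1).choose (j-1) * (m - (j+k+1)/2).choose ((j+k)/2 - 1))]
    rw [convSum m (fun i j => (i/2 - 1).choose (j-1) * (m - (i+1)/2).choose (i/2 - 1))
      (by
        intro i j hi
        have hz : (m - (i+1)/2).choose (i/2 - 1) = 0 := Nat.choose_eq_zero_of_lt (by omega)
        simp only [hz, mul_zero])]
    apply Finset.sum_congr rfl
    intro i hi
    simp only [mem_Icc] at hi
    exact innerB i hi.1 _

lemma odd_sum (m : ℕ) (hm : 1 ≤ m) :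
    ∑ g ∈ Icc 0 m, Phi (2*m+1) g
      = ∑ i ∈ Icc 2 (m+1), So (i-1) * (2*m-i).choose (i-1) := by
  rw [Icc_zero_eq_range, ← Finset.sum_range_reflect]
  have h3 : ∀ k ∈ range (m+1), Phi (2*m+1) (m+1-1-k) = Rz (2*m+1) (2*k+1) := by
    intro k hk
    simp only [mem_range] at hk
    have e : 2*m+1 - 2*(m+1-1-k) = 2*k+1 := by omega
    have hRS : RSz (2*m+1) (2*k+1) = 0 := by
      have h0 : RScount (2*m+1) (2*k+1) = 0 := by
        rw [RScount, if_neg (by simp [Nat.even_add_one, parity_simps])]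
      rw [RSz, h0]
      simp
    rw [Phi, e, hRS, add_zero]
  rw [Finset.sum_congr rfl h3, sum_range_succ']
  have h4 : Rz (2*m+1) (2*0+1) = 0 := by
    norm_num [Rz]
  rw [h4, add_zero]
  have h5 : ∀ k ∈ range m, Rz (2*m+1) (2*(k+1)+1)
      = ∑ j ∈ Icc 1 m, (j+(k+1)-1).choose (2*j-1) * (2*m-(j+(k+1))).choose (j+(k+1)-1) := by
    intro k hk
    simp only [mem_range] at hk
    rw [Rz, if_pos (by omega), Rcount_odd m (k+1) (by omega)]
  rw [Finset.sum_congr rfl h5]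
  have hshift : ∀ F : ℕ → ℕ, ∑ k ∈ Icc 1 m, F k = ∑ k ∈ range m, F (k+1) := by
    intro F
    rw [Icc_sum_shift]
    have e : m+1-1 = m := by omega
    rw [e]
    exact Finset.sum_congr rfl (fun t _ => by rw [add_comm])
  rw [← hshift (fun k => ∑ j ∈ Icc 1 m, (j+k-1).choose (2*j-1) * (2*m-(j+k)).choose (j+k-1))]
  rw [convSum m (fun i j => (i-1).choose (2*j-1) * (2*m-i).choose (i-1))
    (by
      intro i j hi
      have hz : (2*m-i).choose (i-1) = 0 := Nat.choose_eq_zero_of_lt (by omega)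
      simp only [hz, mul_zero])]
  apply Finset.sum_congr rfl
  intro i hi
  simp only [mem_Icc] at hi
  exact innerO m i hi.1 _

/-- For every `n ≥ 2`, `Σ_{g=0}^{⌊n/2⌋} Φ(n,g) = RL(n)`, where
`RL(n) = (1/3)(2^{n-2} + 2(-1)^n) + ε_even(n)·2^{(n-2)/2}` and `ε_even(n) = 1`
if `n` is even, `0` otherwise. Stated multiplied by `3`. -/
theorem sum_Phi_eq_RL (n : ℕ) (hn : 2 ≤ n) :
    (3 * (∑ g ∈ Finset.Icc 0 (n / 2), Phi n g) : ℤ) =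
      2 ^ (n - 2) + 2 * (-1) ^ n + 3 * (if Even n then 2 ^ ((n - 2) / 2) else 0) := by
  rcases Nat.even_or_odd n with he | ho
  · -- n even, n = 2*m
    obtain ⟨m, hm⟩ := he
    have hm' : n = 2*m := by omega
    subst hm'
    have hm1 : 1 ≤ m := by omega
    rcases eq_or_lt_of_le hm1 with h1 | h2
    · -- m = 1, n = 2
      have : m = 1 := h1.symm
      subst this
      norm_num
      decide
    · -- m ≥ 2
      have hm2 : 2 ≤ m := h2
      have hd : 2*m/2 = m := by omega
      rw [hd, even_sum m hm2]
      have hA := SA_even m hm1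
      have hB := SB_eval m hm2
      set SA := ∑ i ∈ Icc 2 (m+1), Se (i-2) * (2*m-i).choose (i-2) with hSA
      set SB := ∑ i ∈ Icc 2 (m+1), 2^(i/2-1) * (m - (i+1)/2).choose (i/2-1) with hSB
      have hA' : (2*(SA:ℤ)) = (Jf (2*m-2) : ℤ) + 1 := by exact_mod_cast hA
      have hB' : (SB:ℤ) = (Jf (m-1) : ℤ) + (Jf (m-2) : ℤ) := by exact_mod_cast hB
      have hJ1 : (3 * Jf (2*m-2) : ℤ) = 2^(2*m-1) + 1 := by
        have := Jf_val (2*m-2)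
        have e1 : 2*m-2+1 = 2*m-1 := by omega
        have e2 : ((-1:ℤ))^(2*m-2) = 1 := Even.neg_one_pow ⟨m-1, by omega⟩
        rw [e1, e2] at this
        exact this
      have hJ2 : (3 * Jf (m-1) : ℤ) = 2^m + (-1)^(m-1) := by
        have := Jf_val (m-1)
        have e1 : m-1+1 = m := by omega
        rw [e1] at this
        exact this
      have hJ3 : (3 * Jf (m-2) : ℤ) = 2^(m-1) + (-1)^(m-2) := by
        have := Jf_val (m-2)
        have e1 : m-2+1 = m-1 := by omega
        rw [e1] at this
        exact this
      have hneg : ((-1:ℤ))^(m-1) + ((-1:ℤ))^(m-2) = 0 := by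
        have e : m-1 = (m-2)+1 := by omega
        rw [e, pow_succ]
        ring
      have hp1 : (2:ℤ)^(2*m-1) = 2*2^(2*m-2) := by
        rw [← pow_succ']
        congr 1
        omega
      have hp2 : (2:ℤ)^m = 2*2^(m-1) := by
        rw [← pow_succ']
        congr 1
        omega
      have hif : Even (2*m) := ⟨m, by ring⟩
      rw [if_pos hif]
      have hep : ((-1:ℤ))^(2*m) = 1 := Even.neg_one_pow ⟨m, by ring⟩
      rw [hep]
      have hd2 : (2*m-2)/2 = m-1 := by omega
      rw [hd2]
      push_cast
      linarith
  · -- n odd, n = 2*m+1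
    obtain ⟨m, hm⟩ := ho
    subst hm
    have hm1 : 1 ≤ m := by omega
    have hd : (2*m+1)/2 = m := by omega
    rw [hd, odd_sum m hm1]
    have hA := SA_odd m hm1
    set S := ∑ i ∈ Icc 2 (m+1), So (i-1) * (2*m-i).choose (i-1) with hS
    have hA' : 2*(S:ℤ) + 1 = (Jf (2*m-1) : ℤ) := by exact_mod_cast hA
    have hJ : (3 * Jf (2*m-1) : ℤ) = 2^(2*m) - 1 := by
      have := Jf_val (2*m-1)
      have e1 : 2*m-1+1 = 2*m := by omega
      have e2 : ((-1:ℤ))^(2*m-1) = -1 := Odd.neg_one_pow ⟨m-1, by omega⟩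
      rw [e1, e2] at this
      linarith
    have hp1 : (2:ℤ)^(2*m) = 2*2^(2*m-1) := by
      rw [← pow_succ']
      congr 1
      omega
    have hif : ¬ Even (2*m+1) := by simp [Nat.even_add_one, parity_simps]
    rw [if_neg hif]
    have hop : ((-1:ℤ))^(2*m+1) = -1 := Odd.neg_one_pow ⟨m, rfl⟩
    rw [hop]
    have he : 2*m+1-2 = 2*m-1 := by omega
    rw [he]
    linarith
end
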